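/- arXiv:2405.06437 — 6 statements merged into one kernel-verified Lean document; each statement's English description precedes it below -/
import Mathlib

section
/- Approximation lower bound (Lemma 3.1 of the paper). Let θ ↦ P_θ be a Markov kernel from a measurable space Θ to a measurable space (𝒳,𝒜), let Θ₀ ⊆ Θ be measurable, let ψ, φ : Θ → ℝ^k be measurable, let ‖·‖ be a norm on ℝ^k, let Q be a probability measure supported on Θ₀, and let T : 𝒳 → ℝ^k be measurable. Assume ∫_{Θ₀} ‖ψ(θ) − φ(θ)‖² dQ(θ) < ∞. Then sup_{θ∈Θ₀} E_θ‖T(X) − ψ(θ)‖² ≥ [ (∫_{Θ₀} E_θ‖T(X) − φ(θ)‖² dQ(θ))^{1/2} − (∫_{Θ₀} ‖ψ(θ) − φ(θ)‖² dQ(θ))^{1/2} ]₊², where both sides may take the value +∞. -/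
open MeasureTheory ProbabilityTheory

/-- **Approximation lower bound (Lemma 3.1).** The minimax risk over `Θ₀` is lower bounded by
the positive part of (Bayes risk of estimating the surrogate `φ`)^{1/2} minus
(approximation bias of `φ` for `ψ` in `L₂(Q)`)^{1/2}, squared. -/
theorem approximation_lower_bound
    {Θ 𝒳 : Type*} [MeasurableSpace Θ] [MeasurableSpace 𝒳]
    (k : ℕ) (κ : Kernel Θ 𝒳) [IsMarkovKernel κ]
    (Θ₀ : Set Θ) (hΘ₀ : MeasurableSet Θ₀)
    (ψ φ : Θ → (Fin k → ℝ)) (hψ : Measurable ψ) (hφ : Measurable φ)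
    -- an arbitrary norm `N` on `ℝ^k`
    (N : (Fin k → ℝ) → ℝ)
    (hN_add : ∀ x y, N (x + y) ≤ N x + N y)
    (hN_smul : ∀ (c : ℝ) (x), N (c • x) = |c| * N x)
    (hN_eq_zero : ∀ x, N x = 0 ↔ x = 0)
    -- a probability measure supported on `Θ₀`
    (Q : Measure Θ) [IsProbabilityMeasure Q] (hQsupp : Q Θ₀ᶜ = 0)
    (T : 𝒳 → (Fin k → ℝ)) (hT : Measurable T)
    (hB : (∫⁻ θ in Θ₀, ENNReal.ofReal ((N (ψ θ - φ θ)) ^ 2) ∂Q) ≠ ⊤) :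
    (⨆ θ ∈ Θ₀, ∫⁻ x, ENNReal.ofReal ((N (T x - ψ θ)) ^ 2) ∂(κ θ))
      ≥ ((∫⁻ θ in Θ₀, (∫⁻ x, ENNReal.ofReal ((N (T x - φ θ)) ^ 2) ∂(κ θ)) ∂Q) ^ (1/2 : ℝ)
          - (∫⁻ θ in Θ₀, ENNReal.ofReal ((N (ψ θ - φ θ)) ^ 2) ∂Q) ^ (1/2 : ℝ)) ^ 2 := by
  -- Basic properties of N
  have hN0 : N 0 = 0 := (hN_eq_zero 0).2 rfl
  have hNneg : ∀ x, N (-x) = N x := by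
    intro x
    have h := hN_smul (-1) x
    simpa using h
  have hNnonneg : ∀ x, 0 ≤ N x := by
    intro x
    have h := hN_add x (-x)
    rw [add_neg_cancel, hN0, hNneg] at h
    linarith
  -- a basis
  set e : Fin k → (Fin k → ℝ) := fun i => Pi.single i (1 : ℝ) with he
  -- N is bounded by a weighted ℓ¹ norm
  have hNbound : ∀ z : Fin k → ℝ, N z ≤ ∑ i, |z i| * N (e i) := by
    intro z
    have hz : z = ∑ i, z i • e i := by
      ext j
      simp [he, Pi.single_apply, Finset.sum_apply, mul_ite]
    calc N z = N (∑ i, z i • e i) := by rw [← hz]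
      _ ≤ ∑ i, N (z i • e i) :=
          Finset.le_sum_of_subadditive N hN0.le hN_add _ _
      _ = ∑ i, |z i| * N (e i) := by simp [hN_smul]
  -- N is continuous, hence measurable
  have hNcont : Continuous N := by
    rw [continuous_iff_continuousAt]
    intro x
    have hbnd : ∀ y, ‖N y - N x‖ ≤ ∑ i, |y i - x i| * N (e i) := by
      intro y
      rw [Real.norm_eq_abs, abs_sub_le_iff]
      constructor
      · have h := hN_add (y - x) x
        rw [sub_add_cancel] at h
        have h2 := hNbound (y - x)
        simp only [Pi.sub_apply] at h2
        linarith
      · have h := hN_add (x - y) y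
        rw [sub_add_cancel] at h
        have h2 := hNbound (x - y)
        simp only [Pi.sub_apply] at h2
        have h3 : ∀ i, |x i - y i| = |y i - x i| := fun i => abs_sub_comm _ _
        simp only [h3] at h2
        linarith
    have htd : Filter.Tendsto (fun y => ∑ i, |y i - x i| * N (e i)) (nhds x) (nhds 0) := by
      have hc : Continuous (fun y : Fin k → ℝ => ∑ i, |y i - x i| * N (e i)) := by
        apply continuous_finset_sum
        intro i _
        exact (((continuous_apply i).sub continuous_const).abs).mul continuous_const
      have := hc.tendsto x
      simpa using this
    have h1 : Filter.Tendsto (fun y => N y - N x) (nhds x) (nhds 0) :=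
      squeeze_zero_norm hbnd htd
    have : Filter.Tendsto (fun y => (N y - N x) + N x) (nhds x) (nhds (0 + N x)) :=
      h1.add tendsto_const_nhds
    simpa [ContinuousAt] using this
  have hNmeas : Measurable N := hNcont.measurable
  -- Notation
  set S := ⨆ θ ∈ Θ₀, ∫⁻ x, ENNReal.ofReal ((N (T x - ψ θ)) ^ 2) ∂(κ θ) with hS
  set R := ∫⁻ θ in Θ₀, (∫⁻ x, ENNReal.ofReal ((N (T x - φ θ)) ^ 2) ∂(κ θ)) ∂Q with hR
  set B := ∫⁻ θ in Θ₀, ENNReal.ofReal ((N (ψ θ - φ θ)) ^ 2) ∂Q with hBdef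
  set A := ∫⁻ θ in Θ₀, (∫⁻ x, ENNReal.ofReal ((N (T x - ψ θ)) ^ 2) ∂(κ θ)) ∂Q with hA
  -- the product measure
  set μ := (Q.restrict Θ₀) ⊗ₘ κ with hμ
  -- functions on the product space
  set f : Θ × 𝒳 → ENNReal := fun p => ENNReal.ofReal (N (T p.2 - ψ p.1)) with hf
  set g : Θ × 𝒳 → ENNReal := fun p => ENNReal.ofReal (N (ψ p.1 - φ p.1)) with hg
  have hfm : Measurable f :=
    ENNReal.measurable_ofReal.comp (hNmeas.comp ((hT.comp measurable_snd).sub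
      (hψ.comp measurable_fst)))
  have hgm : Measurable g :=
    ENNReal.measurable_ofReal.comp (hNmeas.comp ((hψ.comp measurable_fst).sub
      (hφ.comp measurable_fst)))
  have hFm : Measurable (fun p : Θ × 𝒳 => ENNReal.ofReal ((N (T p.2 - φ p.1)) ^ 2)) :=
    ENNReal.measurable_ofReal.comp ((hNmeas.comp ((hT.comp measurable_snd).sub
      (hφ.comp measurable_fst))).pow_const 2)
  -- Express R, A, B as integrals over μ
  have hRμ : R = ∫⁻ p, ENNReal.ofReal ((N (T p.2 - φ p.1)) ^ 2) ∂μ := by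
    rw [hμ, Measure.lintegral_compProd hFm]
  have hAμ : A = ∫⁻ p, f p ^ 2 ∂μ := by
    rw [hμ, Measure.lintegral_compProd (hfm.pow_const 2)]
    refine lintegral_congr fun θ => lintegral_congr fun x => ?_
    show ENNReal.ofReal (N (T x - ψ θ) ^ 2) = ENNReal.ofReal (N (T x - ψ θ)) ^ 2
    exact (ENNReal.ofReal_pow (hNnonneg _) 2)
  have hBμ : B = ∫⁻ p, g p ^ 2 ∂μ := by
    rw [hμ, Measure.lintegral_compProd (hgm.pow_const 2)]
    rw [hBdef]
    refine lintegral_congr fun θ => ?_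
    simp only [hg]
    rw [lintegral_const, measure_univ, mul_one]
    exact ENNReal.ofReal_pow (hNnonneg _) 2
  -- pointwise triangle inequality
  have hptw : ∀ p : Θ × 𝒳, ENNReal.ofReal ((N (T p.2 - φ p.1)) ^ 2) ≤ (f p + g p) ^ 2 := by
    intro p
    rw [ENNReal.ofReal_pow (hNnonneg _) 2]
    apply pow_le_pow_left' _ 2
    calc ENNReal.ofReal (N (T p.2 - φ p.1))
        ≤ ENNReal.ofReal (N (T p.2 - ψ p.1) + N (ψ p.1 - φ p.1)) := by
          apply ENNReal.ofReal_le_ofReal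
          have h := hN_add (T p.2 - ψ p.1) (ψ p.1 - φ p.1)
          rw [sub_add_sub_cancel] at h
          exact h
      _ ≤ f p + g p := ENNReal.ofReal_add_le
  -- Minkowski inequality
  have hMink : R ^ (1/2 : ℝ) ≤ A ^ (1/2 : ℝ) + B ^ (1/2 : ℝ) := by
    rw [hRμ, hAμ, hBμ]
    have h1 : (∫⁻ p, ENNReal.ofReal ((N (T p.2 - φ p.1)) ^ 2) ∂μ)
        ≤ ∫⁻ p, (f p + g p) ^ (2 : ℝ) ∂μ := by
      apply lintegral_mono
      intro p
      show ENNReal.ofReal ((N (T p.2 - φ p.1)) ^ 2) ≤ (f p + g p) ^ (2 : ℝ)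
      rw [show ((f p + g p) ^ (2 : ℝ) = (f p + g p) ^ (2 : ℕ)) by
        rw [← ENNReal.rpow_natCast]; norm_num]
      exact hptw p
    have h2 := ENNReal.lintegral_Lp_add_le (μ := μ) hfm.aemeasurable hgm.aemeasurable
      (one_le_two (α := ℝ))
    have hrw : ∀ h : Θ × 𝒳 → ENNReal, (∫⁻ p, h p ^ (2 : ℝ) ∂μ) = ∫⁻ p, h p ^ (2 : ℕ) ∂μ := by
      intro h
      refine lintegral_congr fun p => ?_
      rw [← ENNReal.rpow_natCast]
      norm_num
    calc (∫⁻ p, ENNReal.ofReal ((N (T p.2 - φ p.1)) ^ 2) ∂μ) ^ (1/2 : ℝ)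
        ≤ (∫⁻ p, (f p + g p) ^ (2 : ℝ) ∂μ) ^ (1/2 : ℝ) :=
          ENNReal.rpow_le_rpow h1 (by norm_num)
      _ ≤ (∫⁻ p, f p ^ (2 : ℝ) ∂μ) ^ (1/(2:ℝ)) + (∫⁻ p, g p ^ (2 : ℝ) ∂μ) ^ (1/(2:ℝ)) := by
          convert h2 using 2 <;> norm_num
      _ = (∫⁻ p, f p ^ (2 : ℕ) ∂μ) ^ (1/2 : ℝ) + (∫⁻ p, g p ^ (2 : ℕ) ∂μ) ^ (1/2 : ℝ) := by
          rw [hrw f, hrw g]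
  -- A ≤ S
  have hAS : A ≤ S := by
    have h1 : A ≤ ∫⁻ _ in Θ₀, S ∂Q := by
      apply setLIntegral_mono' hΘ₀
      intro θ hθ
      exact le_biSup (fun θ => ∫⁻ x, ENNReal.ofReal ((N (T x - ψ θ)) ^ 2) ∂(κ θ)) hθ
    calc A ≤ ∫⁻ _ in Θ₀, S ∂Q := h1
      _ = S * Q Θ₀ := by rw [lintegral_const, Measure.restrict_apply_univ]
      _ ≤ S * 1 := mul_le_mul_right prob_le_one S
      _ = S := mul_one S
  -- Conclude
  have hsub : R ^ (1/2 : ℝ) - B ^ (1/2 : ℝ) ≤ A ^ (1/2 : ℝ) :=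
    tsub_le_iff_right.mpr hMink
  have hsq : (R ^ (1/2 : ℝ) - B ^ (1/2 : ℝ)) ^ 2 ≤ (A ^ (1/2 : ℝ)) ^ 2 :=
    pow_le_pow_left' hsub 2
  have hAhalf : (A ^ (1/2 : ℝ)) ^ 2 = A := by
    rw [← ENNReal.rpow_natCast (A ^ (1/2 : ℝ)) 2, ← ENNReal.rpow_mul]
    norm_num
  calc ((R : ENNReal) ^ (1/2 : ℝ) - B ^ (1/2 : ℝ)) ^ 2 ≤ (A ^ (1/2 : ℝ)) ^ 2 := hsq
    _ = A := hAhalf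
    _ ≤ S := hAS
end

section
/- Mixture Hammersley–Chapman–Robbins bound in chi-squared divergence (Theorem 3.3 of the paper). Let θ ↦ P_θ be a Markov kernel from ℝ^d to (𝒳,𝒜), ψ : ℝ^d → ℝ^k measurable, ‖·‖ a norm on ℝ^k, Q a probability measure on ℝ^d, h ∈ ℝ^d, λ ∈ [0,1], and T : 𝒳 → ℝ^k measurable. With the mixture measures ℙ₀ and ℙ_h on 𝒳 × ℝ^d, set A := ‖∫_{ℝ^d} (ψ(t) − ψ(t−h)) dQ(t)‖² / χ²(ℙ_h ‖ λℙ_h + (1−λ)ℙ₀) (with the convention a/(+∞) := 0), and B := ∫_{ℝ^d} ‖ψ(t) − ψ(t−h)‖² dQ(t); assume B < ∞. Then sup_{θ∈ℝ^d} E_θ‖T(X) − ψ(θ)‖² ≥ [ (1−λ)√A − √(λB) ]₊². -/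
open MeasureTheory ProbabilityTheory ENNReal
open scoped Classical

/-- The chi-squared divergence `χ²(P' ‖ P)`, equal to `∫ (dP'/dP − 1)² dP` when `P' ≪ P`
and `+∞` otherwise. -/
noncomputable def chiSq {α : Type*} [MeasurableSpace α] (P' P : Measure α) : ℝ≥0∞ :=
  if P' ≪ P then ∫⁻ x, ENNReal.ofReal (((P'.rnDeriv P x).toReal - 1) ^ 2) ∂P else ⊤

/-- The mixture measure `ℙ₀` on `𝒳 × ℝ^d`: the law of `(X, θ)` with `θ ~ Q`, `X | θ ~ P_θ`. -/
noncomputable def mixZero {𝒳 : Type*} [MeasurableSpace 𝒳] {d : ℕ}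
    (κ : Kernel (Fin d → ℝ) 𝒳) (Q : Measure (Fin d → ℝ)) : Measure (𝒳 × (Fin d → ℝ)) :=
  (Q.compProd κ).map Prod.swap

/-- The shifted mixture measure `ℙ_h`, the image of `ℙ₀` under `(x, θ) ↦ (x, θ − h)`. -/
noncomputable def mixShift {𝒳 : Type*} [MeasurableSpace 𝒳] {d : ℕ}
    (κ : Kernel (Fin d → ℝ) 𝒳) (Q : Measure (Fin d → ℝ)) (h : Fin d → ℝ) :
    Measure (𝒳 × (Fin d → ℝ)) :=
  (mixZero κ Q).map fun z => (z.1, z.2 - h)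


section NormAux

variable {k : ℕ} {N : (Fin k → ℝ) → ℝ}
  (hN_add : ∀ x y, N (x + y) ≤ N x + N y)
  (hN_smul : ∀ (c : ℝ) (x), N (c • x) = |c| * N x)

include hN_smul in
lemma N_zero : N 0 = 0 := by
  have := hN_smul 0 0
  simpa using this

include hN_smul in
lemma N_neg (x : Fin k → ℝ) : N (-x) = N x := by
  have := hN_smul (-1) x
  simpa using this

include hN_add hN_smul in
lemma N_nonneg (x : Fin k → ℝ) : 0 ≤ N x := by
  have h1 := hN_add x (-x)
  rw [add_neg_cancel, N_zero hN_smul, N_neg hN_smul] at h1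
  linarith

include hN_add hN_smul in
lemma N_sum_le {ι : Type*} (s : Finset ι) (f : ι → (Fin k → ℝ)) :
    N (∑ i ∈ s, f i) ≤ ∑ i ∈ s, N (f i) := by
  classical
  induction s using Finset.cons_induction with
  | empty => simp [N_zero hN_smul]
  | cons a s ha ih =>
      rw [Finset.sum_cons, Finset.sum_cons]
      exact le_trans (hN_add _ _) (by linarith)

include hN_add hN_smul in
lemma N_le_sum (x : Fin k → ℝ) :
    N x ≤ ∑ i, |x i| * N (Pi.single i 1) := by
  have hx : x = ∑ i, (x i) • (Pi.single i (1:ℝ) : Fin k → ℝ) := by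
    funext j
    simp [Finset.sum_apply, Pi.single_apply]
  calc N x = N (∑ i, (x i) • (Pi.single i (1:ℝ) : Fin k → ℝ)) := by rw [← hx]
    _ ≤ ∑ i, N ((x i) • (Pi.single i (1:ℝ) : Fin k → ℝ)) := N_sum_le hN_add hN_smul _ _
    _ = ∑ i, |x i| * N (Pi.single i 1) := by simp [hN_smul]

include hN_add hN_smul in
lemma N_continuous : Continuous N := by
  rw [continuous_iff_continuousAt]
  intro x
  have key : ∀ y, |N y - N x| ≤ ∑ i, |(y - x) i| * N (Pi.single i 1) := by
    intro y
    have h1 : N y ≤ N (y - x) + N x := by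
      have := hN_add (y - x) x
      simpa using this
    have h2 : N x ≤ N (y - x) + N y := by
      have := hN_add (x - y) y
      have hxy : N (x - y) = N (y - x) := by
        rw [← N_neg hN_smul (x - y)]; congr 1; abel
      simpa [hxy] using this
    have h3 : 0 ≤ N (y - x) := N_nonneg hN_add hN_smul _
    have := N_le_sum hN_add hN_smul (y - x)
    rw [abs_le]
    constructor <;> nlinarith [abs_nonneg (N y - N x)]
  have hg : Filter.Tendsto (fun y => ∑ i, |(y - x) i| * N (Pi.single i 1)) (nhds x)
      (nhds 0) := by
    have hc : Continuous fun y : Fin k → ℝ => ∑ i, |(y - x) i| * N (Pi.single i 1) := by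
      refine continuous_finset_sum _ fun i _ => ?_
      exact (((continuous_apply i).sub continuous_const).abs).mul continuous_const
    have := hc.tendsto x
    simpa using this
  rw [ContinuousAt, tendsto_iff_dist_tendsto_zero]
  refine squeeze_zero (fun y => dist_nonneg) (fun y => ?_) hg
  rw [Real.dist_eq]
  exact key y

include hN_add hN_smul in
lemma exists_dual (Δ : Fin k → ℝ) (hΔ : Δ ≠ 0) :
    ∃ G : (Fin k → ℝ) →ₗ[ℝ] ℝ, G Δ = N Δ ∧ ∀ x, G x ≤ N x := by
  set f := LinearPMap.mkSpanSingleton (K := ℝ) (L := ℝ) (σ := RingHom.id ℝ) Δ (N Δ) hΔ with hf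
  obtain ⟨G, hG1, hG2⟩ := exists_extension_of_le_sublinear f N
    (fun c hc x => by rw [hN_smul]; rw [abs_of_pos hc])
    hN_add
    (by
      rintro ⟨x, hx⟩
      obtain ⟨c, hc⟩ := Submodule.mem_span_singleton.mp hx
      have hxe : (⟨x, hx⟩ : f.domain) = ⟨c • Δ, hc ▸ hx⟩ := Subtype.ext hc.symm
      rw [hxe]
      erw [LinearPMap.mkSpanSingleton'_apply]
      simp only [smul_eq_mul]
      calc c * N Δ ≤ |c| * N Δ :=
            mul_le_mul_of_nonneg_right (le_abs_self c) (N_nonneg hN_add hN_smul Δ)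
        _ = N (c • Δ) := (hN_smul c Δ).symm)
  refine ⟨G, ?_, hG2⟩
  have := hG1 ⟨Δ, Submodule.mem_span_singleton_self Δ⟩
  exact this.trans (LinearPMap.mkSpanSingleton_apply ℝ ℝ (σ := RingHom.id ℝ) hΔ (N Δ))

end NormAux

lemma integrable_of_sq_lintegral {α : Type*} [MeasurableSpace α] {μ : Measure α}
    [IsFiniteMeasure μ] {g : α → ℝ} (hg : AEStronglyMeasurable g μ)
    (hint : ∫⁻ z, ENNReal.ofReal (g z ^ 2) ∂μ ≠ ⊤) : Integrable g μ := by
  refine ⟨hg, ?_⟩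
  rw [hasFiniteIntegral_iff_norm]
  calc ∫⁻ z, ENNReal.ofReal ‖g z‖ ∂μ
      ≤ ∫⁻ z, 1 + ENNReal.ofReal (g z ^ 2) ∂μ := by
        refine lintegral_mono fun z => ?_
        rw [Real.norm_eq_abs]
        calc ENNReal.ofReal |g z| ≤ ENNReal.ofReal (1 + g z ^ 2) := by
              refine ENNReal.ofReal_le_ofReal ?_
              nlinarith [sq_abs (g z), sq_nonneg (|g z| - 1)]
          _ = 1 + ENNReal.ofReal (g z ^ 2) := by
              rw [ENNReal.ofReal_add zero_le_one (sq_nonneg _), ENNReal.ofReal_one]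
    _ = μ Set.univ + ∫⁻ z, ENNReal.ofReal (g z ^ 2) ∂μ := by
        rw [lintegral_add_left measurable_const, lintegral_one]
    _ < ⊤ := ENNReal.add_lt_top.2 ⟨measure_lt_top μ _, lt_top_iff_ne_top.2 hint⟩

lemma ennreal_sqrt_sq (x : ℝ≥0∞) : (x ^ (1/2 : ℝ)) ^ 2 = x := by
  rw [← ENNReal.rpow_two, ← ENNReal.rpow_mul]
  norm_num

lemma ennreal_sq_sqrt (x : ℝ≥0∞) : (x ^ 2) ^ (1/2 : ℝ) = x := by
  rw [← ENNReal.rpow_two, ← ENNReal.rpow_mul]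
  norm_num

lemma ennreal_mix_bound {lam' mu' R B Lh L0 : ℝ≥0∞} (hsum : lam' + mu' = 1)
    (hlam : lam' ≤ 1) (hLh : Lh ≤ (R ^ (1/2 : ℝ) + B ^ (1/2 : ℝ)) ^ 2) (hL0 : L0 ≤ R) :
    lam' * Lh + mu' * L0 ≤ (R ^ (1/2 : ℝ) + (lam' * B) ^ (1/2 : ℝ)) ^ 2 := by
  set X := R ^ (1/2 : ℝ) with hX
  set Y := B ^ (1/2 : ℝ) with hY
  set l := lam' ^ (1/2 : ℝ) with hl
  have hX2 : X ^ 2 = R := ennreal_sqrt_sq R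
  have hY2 : Y ^ 2 = B := ennreal_sqrt_sq B
  have hl2 : l ^ 2 = lam' := ennreal_sqrt_sq lam'
  have hll : lam' ≤ l := by
    rw [hl]
    calc lam' = lam' ^ (1 : ℝ) := (ENNReal.rpow_one lam').symm
      _ ≤ lam' ^ (1/2 : ℝ) := ENNReal.rpow_le_rpow_of_exponent_ge hlam (by norm_num)
  have hlam'B : (lam' * B) ^ (1/2 : ℝ) = l * Y := by
    rw [ENNReal.mul_rpow_of_nonneg _ _ (by norm_num : (0:ℝ) ≤ 1/2), ← hl, ← hY]
  rw [hlam'B]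
  calc lam' * Lh + mu' * L0
      ≤ lam' * (X + Y) ^ 2 + mu' * X ^ 2 := by
        rw [hX2]; exact add_le_add (mul_le_mul_right hLh _) (mul_le_mul_right hL0 _)
    _ = (lam' + mu') * X ^ 2 + (lam' * (X * Y) + lam' * (X * Y)) + lam' * Y ^ 2 := by ring
    _ = X ^ 2 + (lam' * (X * Y) + lam' * (X * Y)) + l ^ 2 * Y ^ 2 := by
        rw [hsum, one_mul, hl2]
    _ ≤ X ^ 2 + (l * (X * Y) + l * (X * Y)) + l ^ 2 * Y ^ 2 := by
        gcongr
    _ = (X + l * Y) ^ 2 := by ring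

/-- **Mixture HCR bound.** -/
theorem mixture_HCR_chiSq
    {𝒳 : Type*} [MeasurableSpace 𝒳] (d k : ℕ)
    (κ : Kernel (Fin d → ℝ) 𝒳) [IsMarkovKernel κ]
    (ψ : (Fin d → ℝ) → (Fin k → ℝ)) (hψ : Measurable ψ)
    -- an arbitrary norm `N` on `ℝ^k`
    (N : (Fin k → ℝ) → ℝ)
    (hN_add : ∀ x y, N (x + y) ≤ N x + N y)
    (hN_smul : ∀ (c : ℝ) (x), N (c • x) = |c| * N x)
    (hN_eq_zero : ∀ x, N x = 0 ↔ x = 0)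
    (Q : Measure (Fin d → ℝ)) [IsProbabilityMeasure Q]
    (h : Fin d → ℝ) (lam : ℝ) (hlam : lam ∈ Set.Icc (0:ℝ) 1)
    (T : 𝒳 → (Fin k → ℝ)) (hT : Measurable T)
    (hB : (∫⁻ t, ENNReal.ofReal ((N (ψ t - ψ (t - h))) ^ 2) ∂Q) ≠ ⊤) :
    (⨆ θ, ∫⁻ x, ENNReal.ofReal ((N (T x - ψ θ)) ^ 2) ∂(κ θ))
      ≥ (ENNReal.ofReal (1 - lam)
            * (ENNReal.ofReal ((N (∫ t, (ψ t - ψ (t - h)) ∂Q)) ^ 2)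
                / chiSq (mixShift κ Q h)
                    (ENNReal.ofReal lam • mixShift κ Q h
                      + ENNReal.ofReal (1 - lam) • mixZero κ Q)) ^ (1/2 : ℝ)
          - (ENNReal.ofReal lam
              * ∫⁻ t, ENNReal.ofReal ((N (ψ t - ψ (t - h))) ^ 2) ∂Q) ^ (1/2 : ℝ)) ^ 2 := by
  obtain ⟨hlam0, hlam1⟩ := hlam
  rw [ge_iff_le]
  set R := ⨆ θ, ∫⁻ x, ENNReal.ofReal ((N (T x - ψ θ)) ^ 2) ∂(κ θ) with hR
  set B := ∫⁻ t, ENNReal.ofReal ((N (ψ t - ψ (t - h))) ^ 2) ∂Q with hBdef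
  set Δ := ∫ t, (ψ t - ψ (t - h)) ∂Q with hΔdef
  set P0 := mixZero κ Q with hP0def
  set Ph := mixShift κ Q h with hPhdef
  set M := ENNReal.ofReal lam • Ph + ENNReal.ofReal (1 - lam) • P0 with hMdef
  set χ := chiSq Ph M with hχdef
  -- degenerate cases
  by_cases hRtop : R = ⊤
  · rw [hRtop]; exact le_top
  by_cases hlam1' : lam = 1
  · subst hlam1'
    simp only [sub_self, ENNReal.ofReal_zero, zero_mul, zero_tsub]
    simp
  by_cases hNΔ : N Δ = 0
  · rw [hNΔ]
    simp only [ne_eq, OfNat.ofNat_ne_zero, not_false_eq_true, zero_pow, ENNReal.ofReal_zero,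
      ENNReal.zero_div, ENNReal.zero_rpow_of_pos (by norm_num : (0:ℝ) < 1/2), mul_zero,
      zero_tsub]
    simp
  by_cases hχtop : χ = ⊤
  · rw [hχtop]
    simp only [ENNReal.div_top, ENNReal.zero_rpow_of_pos (by norm_num : (0:ℝ) < 1/2), mul_zero,
      zero_tsub]
    simp
  -- main case
  have hNnn := N_nonneg hN_add hN_smul
  have hNc := N_continuous hN_add hN_smul
  have hΔne : Δ ≠ 0 := fun h0 => hNΔ (by rw [h0]; exact (hN_eq_zero 0).2 rfl)
  have hNΔpos : 0 < N Δ := lt_of_le_of_ne (hNnn Δ) (Ne.symm hNΔ)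
  have hlamlt : lam < 1 := lt_of_le_of_ne hlam1 hlam1'
  have h1lam : (0:ℝ) < 1 - lam := by linarith
  have hm : Measurable (fun z : 𝒳 × (Fin d → ℝ) => (z.1, z.2 - h)) :=
    measurable_fst.prodMk (measurable_snd.sub measurable_const)
  haveI hP0prob : IsProbabilityMeasure P0 := by
    rw [hP0def]; unfold mixZero
    exact Measure.isProbabilityMeasure_map measurable_swap.aemeasurable
  haveI hPhprob : IsProbabilityMeasure Ph := by
    rw [hPhdef]; unfold mixShift
    have : IsProbabilityMeasure (mixZero κ Q) := by rw [← hP0def]; exact hP0prob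
    exact Measure.isProbabilityMeasure_map hm.aemeasurable
  haveI hMprob : IsProbabilityMeasure M := by
    constructor
    rw [hMdef]
    simp only [Measure.coe_add, Measure.coe_smul, Pi.add_apply, Pi.smul_apply,
      measure_univ, smul_eq_mul, mul_one]
    rw [← ENNReal.ofReal_add hlam0 (by linarith)]
    norm_num
  -- transport of lintegrals
  have htrans0P : ∀ (g : 𝒳 × (Fin d → ℝ) → ℝ≥0∞), Measurable g →
      ∫⁻ z, g z ∂P0 = ∫⁻ p : (Fin d → ℝ) × 𝒳, g (p.2, p.1) ∂(Q.compProd κ) := by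
    intro g hg
    rw [hP0def]; unfold mixZero
    rw [lintegral_map hg measurable_swap]
    rfl
  have htranshP : ∀ (g : 𝒳 × (Fin d → ℝ) → ℝ≥0∞), Measurable g →
      ∫⁻ z, g z ∂Ph = ∫⁻ p : (Fin d → ℝ) × 𝒳, g (p.2, p.1 - h) ∂(Q.compProd κ) := by
    intro g hg
    rw [hPhdef]; unfold mixShift mixZero
    rw [lintegral_map hg hm, lintegral_map
      (f := fun z : 𝒳 × (Fin d → ℝ) => g (z.1, z.2 - h)) (hg.comp hm) measurable_swap]
    rfl
  -- measurability helpers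
  have mw : Measurable (fun z : 𝒳 × (Fin d → ℝ) => T z.1 - ψ z.2) :=
    (hT.comp measurable_fst).sub (hψ.comp measurable_snd)
  have mNw : Measurable (fun z : 𝒳 × (Fin d → ℝ) => N (T z.1 - ψ z.2)) :=
    hNc.measurable.comp mw
  have mNw2 : Measurable (fun z : 𝒳 × (Fin d → ℝ) => ENNReal.ofReal (N (T z.1 - ψ z.2) ^ 2)) :=
    ENNReal.measurable_ofReal.comp (mNw.pow_const 2)
  have mF1 : Measurable (fun p : (Fin d → ℝ) × 𝒳 => ENNReal.ofReal (N (T p.2 - ψ p.1))) :=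
    ENNReal.measurable_ofReal.comp (hNc.measurable.comp
      ((hT.comp measurable_snd).sub (hψ.comp measurable_fst)))
  have mF2 : Measurable (fun p : (Fin d → ℝ) × 𝒳 => ENNReal.ofReal (N (ψ p.1 - ψ (p.1 - h)))) :=
    ENNReal.measurable_ofReal.comp (hNc.measurable.comp
      ((hψ.comp measurable_fst).sub (hψ.comp (measurable_fst.sub measurable_const))))
  have mQ1 : Measurable (fun p : (Fin d → ℝ) × 𝒳 => ENNReal.ofReal (N (T p.2 - ψ p.1) ^ 2)) :=
    ENNReal.measurable_ofReal.comp (Measurable.pow_const (hNc.measurable.comp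
      ((hT.comp measurable_snd).sub (hψ.comp measurable_fst))) 2)
  have mQ2 : Measurable (fun p : (Fin d → ℝ) × 𝒳 => ENNReal.ofReal (N (ψ p.1 - ψ (p.1 - h)) ^ 2)) :=
    ENNReal.measurable_ofReal.comp (Measurable.pow_const (hNc.measurable.comp
      ((hψ.comp measurable_fst).sub (hψ.comp (measurable_fst.sub measurable_const)))) 2)
  have hsq : ∀ a : ℝ, 0 ≤ a → (ENNReal.ofReal a) ^ (2 : ℝ) = ENNReal.ofReal (a ^ 2) :=
    fun a ha => by rw [ENNReal.rpow_two, ← ENNReal.ofReal_pow ha]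
  -- bound over P0
  have hinner : ∀ t, ∫⁻ x, ENNReal.ofReal (N (T x - ψ t) ^ 2) ∂(κ t) ≤ R :=
    fun t => le_iSup (fun θ => ∫⁻ x, ENNReal.ofReal (N (T x - ψ θ) ^ 2) ∂(κ θ)) t
  have hL0 : ∫⁻ z, ENNReal.ofReal (N (T z.1 - ψ z.2) ^ 2) ∂P0 ≤ R := by
    rw [htrans0P _ mNw2]
    calc ∫⁻ p : (Fin d → ℝ) × 𝒳, ENNReal.ofReal (N (T p.2 - ψ p.1) ^ 2) ∂(Q.compProd κ)
        = ∫⁻ t, ∫⁻ x, ENNReal.ofReal (N (T x - ψ t) ^ 2) ∂(κ t) ∂Q :=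
          Measure.lintegral_compProd mQ1
      _ ≤ ∫⁻ _, R ∂Q := lintegral_mono hinner
      _ = R := by simp
  -- bound over Ph via Minkowski
  have hF1sq : ∫⁻ p : (Fin d → ℝ) × 𝒳, (ENNReal.ofReal (N (T p.2 - ψ p.1))) ^ (2:ℝ)
      ∂(Q.compProd κ) ≤ R := by
    calc ∫⁻ p : (Fin d → ℝ) × 𝒳, (ENNReal.ofReal (N (T p.2 - ψ p.1))) ^ (2:ℝ) ∂(Q.compProd κ)
        = ∫⁻ p : (Fin d → ℝ) × 𝒳, ENNReal.ofReal (N (T p.2 - ψ p.1) ^ 2) ∂(Q.compProd κ) :=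
          lintegral_congr fun p => hsq _ (hNnn _)
      _ = ∫⁻ t, ∫⁻ x, ENNReal.ofReal (N (T x - ψ t) ^ 2) ∂(κ t) ∂Q :=
          Measure.lintegral_compProd mQ1
      _ ≤ ∫⁻ _, R ∂Q := lintegral_mono hinner
      _ = R := by simp
  have hF2sq : ∫⁻ p : (Fin d → ℝ) × 𝒳, (ENNReal.ofReal (N (ψ p.1 - ψ (p.1 - h)))) ^ (2:ℝ)
      ∂(Q.compProd κ) = B := by
    calc ∫⁻ p : (Fin d → ℝ) × 𝒳, (ENNReal.ofReal (N (ψ p.1 - ψ (p.1 - h)))) ^ (2:ℝ)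
          ∂(Q.compProd κ)
        = ∫⁻ p : (Fin d → ℝ) × 𝒳, ENNReal.ofReal (N (ψ p.1 - ψ (p.1 - h)) ^ 2) ∂(Q.compProd κ) :=
          lintegral_congr fun p => hsq _ (hNnn _)
      _ = ∫⁻ t, ∫⁻ _x, ENNReal.ofReal (N (ψ t - ψ (t - h)) ^ 2) ∂(κ t) ∂Q :=
          Measure.lintegral_compProd mQ2
      _ = B := by rw [hBdef]; simp
  have hLh : ∫⁻ z, ENNReal.ofReal (N (T z.1 - ψ z.2) ^ 2) ∂Ph
      ≤ (R ^ (1/2 : ℝ) + B ^ (1/2 : ℝ)) ^ 2 := by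
    rw [htranshP _ mNw2]
    have hpt : ∀ p : (Fin d → ℝ) × 𝒳, ENNReal.ofReal (N (T p.2 - ψ (p.1 - h)) ^ 2)
        ≤ ((fun p : (Fin d → ℝ) × 𝒳 => ENNReal.ofReal (N (T p.2 - ψ p.1)))
            + (fun p : (Fin d → ℝ) × 𝒳 => ENNReal.ofReal (N (ψ p.1 - ψ (p.1 - h))))) p
              ^ (2:ℝ) := by
      intro p
      rw [← hsq _ (hNnn _)]
      refine ENNReal.rpow_le_rpow ?_ (by norm_num)
      simp only [Pi.add_apply]
      rw [← ENNReal.ofReal_add (hNnn _) (hNnn _)]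
      refine ENNReal.ofReal_le_ofReal ?_
      calc N (T p.2 - ψ (p.1 - h)) = N ((T p.2 - ψ p.1) + (ψ p.1 - ψ (p.1 - h))) := by
            rw [sub_add_sub_cancel]
        _ ≤ _ := hN_add _ _
    have hmink := ENNReal.lintegral_Lp_add_le (μ := Q.compProd κ)
      mF1.aemeasurable mF2.aemeasurable (one_le_two : (1:ℝ) ≤ 2)
    calc ∫⁻ p : (Fin d → ℝ) × 𝒳, ENNReal.ofReal (N (T p.2 - ψ (p.1 - h)) ^ 2) ∂(Q.compProd κ)
        ≤ ∫⁻ p : (Fin d → ℝ) × 𝒳, ((fun p : (Fin d → ℝ) × 𝒳 => ENNReal.ofReal (N (T p.2 - ψ p.1)))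
            + (fun p : (Fin d → ℝ) × 𝒳 => ENNReal.ofReal (N (ψ p.1 - ψ (p.1 - h))))) p ^ (2:ℝ)
            ∂(Q.compProd κ) := lintegral_mono hpt
      _ = ((∫⁻ p : (Fin d → ℝ) × 𝒳, ((fun p : (Fin d → ℝ) × 𝒳 => ENNReal.ofReal (N (T p.2 - ψ p.1)))
            + (fun p : (Fin d → ℝ) × 𝒳 => ENNReal.ofReal (N (ψ p.1 - ψ (p.1 - h))))) p ^ (2:ℝ)
            ∂(Q.compProd κ)) ^ (1/2:ℝ)) ^ 2 := (ennreal_sqrt_sq _).symm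
      _ ≤ ((∫⁻ p : (Fin d → ℝ) × 𝒳, (ENNReal.ofReal (N (T p.2 - ψ p.1))) ^ (2:ℝ) ∂(Q.compProd κ))
              ^ (1/2:ℝ)
            + (∫⁻ p : (Fin d → ℝ) × 𝒳, (ENNReal.ofReal (N (ψ p.1 - ψ (p.1 - h)))) ^ (2:ℝ)
              ∂(Q.compProd κ)) ^ (1/2:ℝ)) ^ 2 := by
          refine pow_le_pow_left₀ (zero_le) ?_ 2
          simpa using hmink
      _ ≤ (R ^ (1/2 : ℝ) + B ^ (1/2 : ℝ)) ^ 2 := by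
          refine pow_le_pow_left₀ (zero_le) ?_ 2
          exact add_le_add (ENNReal.rpow_le_rpow hF1sq (by norm_num))
            (le_of_eq (by rw [hF2sq]))
  -- combination over M
  have hLM : ∫⁻ z, ENNReal.ofReal (N (T z.1 - ψ z.2) ^ 2) ∂M
      ≤ (R ^ (1/2 : ℝ) + (ENNReal.ofReal lam * B) ^ (1/2 : ℝ)) ^ 2 := by
    rw [hMdef, lintegral_add_measure, lintegral_smul_measure, lintegral_smul_measure]
    refine ennreal_mix_bound ?_ ?_ hLh hL0
    · rw [← ENNReal.ofReal_add hlam0 (by linarith)]; norm_num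
    · calc ENNReal.ofReal lam ≤ ENNReal.ofReal 1 := ENNReal.ofReal_le_ofReal hlam1
        _ = 1 := ENNReal.ofReal_one
  -- finiteness facts
  have hRBfin : (R ^ (1/2:ℝ) + B ^ (1/2:ℝ)) ^ 2 ≠ ⊤ :=
    ENNReal.pow_ne_top (ENNReal.add_ne_top.2
      ⟨ENNReal.rpow_ne_top_of_nonneg (by norm_num) hRtop,
        ENNReal.rpow_ne_top_of_nonneg (by norm_num) hB⟩)
  have hSfin : (R ^ (1/2:ℝ) + (ENNReal.ofReal lam * B) ^ (1/2:ℝ)) ^ 2 ≠ ⊤ :=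
    ENNReal.pow_ne_top (ENNReal.add_ne_top.2
      ⟨ENNReal.rpow_ne_top_of_nonneg (by norm_num) hRtop,
        ENNReal.rpow_ne_top_of_nonneg (by norm_num)
          (ENNReal.mul_ne_top ENNReal.ofReal_ne_top hB)⟩)
  -- dual functional
  obtain ⟨G, hGΔ, hGle⟩ := exists_dual hN_add hN_smul Δ hΔne
  have hGabs : ∀ v, |G v| ≤ N v := by
    intro v
    rw [abs_le]
    refine ⟨?_, hGle v⟩
    have h1 := hGle (-v)
    rw [map_neg, N_neg hN_smul] at h1
    linarith
  have hGcont : Continuous G := G.continuous_of_finiteDimensional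
  set φ : 𝒳 × (Fin d → ℝ) → ℝ := fun z => G (T z.1 - ψ z.2) with hφdef
  have mφ : Measurable φ := hGcont.measurable.comp mw
  have hφsq : ∀ z, ENNReal.ofReal (φ z ^ 2) ≤ ENNReal.ofReal (N (T z.1 - ψ z.2) ^ 2) := by
    intro z
    refine ENNReal.ofReal_le_ofReal ?_
    rw [← sq_abs (φ z)]
    exact pow_le_pow_left₀ (abs_nonneg _) (hGabs _) 2
  -- integrability of φ
  have hφsqM : ∫⁻ z, ENNReal.ofReal (φ z ^ 2) ∂M ≠ ⊤ :=
    ne_top_of_le_ne_top hSfin ((lintegral_mono hφsq).trans hLM)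
  have intφM : Integrable φ M :=
    integrable_of_sq_lintegral mφ.aestronglyMeasurable hφsqM
  have intφPh : Integrable φ Ph := integrable_of_sq_lintegral mφ.aestronglyMeasurable
    (ne_top_of_le_ne_top hRBfin ((lintegral_mono hφsq).trans hLh))
  have intφP0 : Integrable φ P0 := integrable_of_sq_lintegral mφ.aestronglyMeasurable
    (ne_top_of_le_ne_top hRtop ((lintegral_mono hφsq).trans hL0))
  -- Radon-Nikodym derivative
  set f : 𝒳 × (Fin d → ℝ) → ℝ := fun z => (Ph.rnDeriv M z).toReal with hfdef
  have mf : Measurable f := (Measure.measurable_rnDeriv Ph M).ennreal_toReal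
  have ac : Ph ≪ M := by
    by_contra hc
    apply hχtop
    rw [hχdef]; unfold chiSq; rw [if_neg hc]
  have hχeq : χ = ∫⁻ z, ENNReal.ofReal ((f z - 1) ^ 2) ∂M := by
    rw [hχdef]; unfold chiSq; rw [if_pos ac]
  have hfsqle : ∫⁻ z, ENNReal.ofReal (f z ^ 2) ∂M ≤ 2 * χ + 2 := by
    have hpt : ∀ z, ENNReal.ofReal (f z ^ 2) ≤ 2 * ENNReal.ofReal ((f z - 1) ^ 2) + 2 := by
      intro z
      calc ENNReal.ofReal (f z ^ 2) ≤ ENNReal.ofReal (2 * (f z - 1) ^ 2 + 2) :=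
            ENNReal.ofReal_le_ofReal (by nlinarith [sq_nonneg (f z - 2)])
        _ = 2 * ENNReal.ofReal ((f z - 1) ^ 2) + 2 := by
            rw [ENNReal.ofReal_add (by positivity) (by norm_num),
              ENNReal.ofReal_mul (by norm_num)]
            norm_num
    calc ∫⁻ z, ENNReal.ofReal (f z ^ 2) ∂M
        ≤ ∫⁻ z, (2 * ENNReal.ofReal ((f z - 1) ^ 2) + 2) ∂M := lintegral_mono hpt
      _ = 2 * ∫⁻ z, ENNReal.ofReal ((f z - 1) ^ 2) ∂M + 2 := by
          rw [lintegral_add_right _ measurable_const, lintegral_const_mul 2 (f := fun z => ENNReal.ofReal ((f z - 1) ^ 2))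
            (((mf.sub measurable_const).pow_const 2).ennreal_ofReal)]
          simp
      _ = 2 * χ + 2 := by rw [hχeq]
  have hfsqfin : ∫⁻ z, ENNReal.ofReal (f z ^ 2) ∂M ≠ ⊤ :=
    ne_top_of_le_ne_top (ENNReal.add_ne_top.2
      ⟨ENNReal.mul_ne_top (by norm_num) hχtop, by norm_num⟩) hfsqle
  -- Cauchy-Schwarz in lintegral form
  have hCS : ∀ (u v : 𝒳 × (Fin d → ℝ) → ℝ), Measurable u → Measurable v →
      ∫⁻ z, ENNReal.ofReal |u z| * ENNReal.ofReal |v z| ∂M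
        ≤ (∫⁻ z, ENNReal.ofReal (u z ^ 2) ∂M) ^ (1/2:ℝ)
          * (∫⁻ z, ENNReal.ofReal (v z ^ 2) ∂M) ^ (1/2:ℝ) := by
    intro u v hu hv
    have hconj : Real.HolderConjugate 2 2 := Real.HolderConjugate.two_two
    have h2 := ENNReal.lintegral_mul_le_Lp_mul_Lq M hconj
      hu.abs.ennreal_ofReal.aemeasurable hv.abs.ennreal_ofReal.aemeasurable
    calc ∫⁻ z, ENNReal.ofReal |u z| * ENNReal.ofReal |v z| ∂M
        ≤ (∫⁻ z, (ENNReal.ofReal |u z|) ^ (2:ℝ) ∂M) ^ (1/2:ℝ)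
          * (∫⁻ z, (ENNReal.ofReal |v z|) ^ (2:ℝ) ∂M) ^ (1/2:ℝ) := h2
      _ = (∫⁻ z, ENNReal.ofReal (u z ^ 2) ∂M) ^ (1/2:ℝ)
          * (∫⁻ z, ENNReal.ofReal (v z ^ 2) ∂M) ^ (1/2:ℝ) := by
          congr 1
          · congr 1
            exact lintegral_congr fun z => by rw [hsq _ (abs_nonneg _), sq_abs]
          · congr 1
            exact lintegral_congr fun z => by rw [hsq _ (abs_nonneg _), sq_abs]
  -- integrability of f * φ
  have intfφ : Integrable (fun z => f z * φ z) M := by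
    refine ⟨(mf.mul mφ).aestronglyMeasurable, ?_⟩
    rw [hasFiniteIntegral_iff_norm]
    calc ∫⁻ z, ENNReal.ofReal ‖f z * φ z‖ ∂M
        = ∫⁻ z, ENNReal.ofReal |f z| * ENNReal.ofReal |φ z| ∂M :=
          lintegral_congr fun z => by
            rw [Real.norm_eq_abs, abs_mul, ENNReal.ofReal_mul (abs_nonneg _)]
      _ ≤ (∫⁻ z, ENNReal.ofReal (f z ^ 2) ∂M) ^ (1/2:ℝ)
          * (∫⁻ z, ENNReal.ofReal (φ z ^ 2) ∂M) ^ (1/2:ℝ) := hCS f φ mf mφ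
      _ < ⊤ := ENNReal.mul_lt_top
          (ENNReal.rpow_lt_top_of_nonneg (by norm_num) hfsqfin)
          (ENNReal.rpow_lt_top_of_nonneg (by norm_num) hφsqM)
  -- transported integrability
  have hP0eq : P0 = (Q.compProd κ).map Prod.swap := by rw [hP0def]; rfl
  have hPheq : Ph = P0.map (fun z : 𝒳 × (Fin d → ℝ) => (z.1, z.2 - h)) := by
    rw [hPhdef, hP0def]; rfl
  have intcomp0 : Integrable (fun p : (Fin d → ℝ) × 𝒳 => φ (Prod.swap p)) (Q.compProd κ) := by
    refine (integrable_map_measure mφ.aestronglyMeasurable measurable_swap.aemeasurable).1 ?_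
    rw [← hP0eq]; exact intφP0
  have intcompm : Integrable (fun z : 𝒳 × (Fin d → ℝ) => φ (z.1, z.2 - h)) P0 := by
    refine (integrable_map_measure mφ.aestronglyMeasurable hm.aemeasurable).1 ?_
    rw [← hPheq]; exact intφPh
  have intcomph : Integrable (fun p : (Fin d → ℝ) × 𝒳 => φ ((Prod.swap p).1, (Prod.swap p).2 - h))
      (Q.compProd κ) := by
    refine (integrable_map_measure (g := fun z : 𝒳 × (Fin d → ℝ) => φ (z.1, z.2 - h))
      (f := (Prod.swap : (Fin d → ℝ) × 𝒳 → 𝒳 × (Fin d → ℝ)))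
      (mφ.comp hm).aestronglyMeasurable measurable_swap.aemeasurable).1 ?_
    rw [← hP0eq]; exact intcompm
  have hIφ0 : ∫ z, φ z ∂P0 = ∫ p : (Fin d → ℝ) × 𝒳, φ (Prod.swap p) ∂(Q.compProd κ) := by
    rw [hP0eq]
    exact integral_map measurable_swap.aemeasurable mφ.aestronglyMeasurable
  have hIφh : ∫ z, φ z ∂Ph
      = ∫ p : (Fin d → ℝ) × 𝒳, φ ((Prod.swap p).1, (Prod.swap p).2 - h) ∂(Q.compProd κ) := by
    rw [hPheq, integral_map hm.aemeasurable mφ.aestronglyMeasurable, hP0eq]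
    exact integral_map (f := fun z : 𝒳 × (Fin d → ℝ) => φ (z.1, z.2 - h))
      measurable_swap.aemeasurable (mφ.comp hm).aestronglyMeasurable
  have hintΔ : Integrable (fun t => ψ t - ψ (t - h)) Q := by
    by_contra hni
    exact hΔne (by rw [hΔdef]; exact integral_undef hni)
  have E1 : ∫ z, φ z ∂Ph - ∫ z, φ z ∂P0 = N Δ := by
    rw [hIφh, hIφ0, ← integral_sub intcomph intcomp0]
    have hu : Measurable (fun t => G (ψ t - ψ (t - h))) :=
      hGcont.measurable.comp (hψ.sub (hψ.comp (measurable_id.sub measurable_const)))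
    have hQfst : (Q.compProd κ).map Prod.fst = Q := by
      conv_rhs => rw [← Measure.fst_compProd Q κ]
      rfl
    calc ∫ p : (Fin d → ℝ) × 𝒳, (φ ((Prod.swap p).1, (Prod.swap p).2 - h) - φ (Prod.swap p))
          ∂(Q.compProd κ)
        = ∫ p : (Fin d → ℝ) × 𝒳, G (ψ p.1 - ψ (p.1 - h)) ∂(Q.compProd κ) := by
          refine integral_congr_ae (Filter.EventuallyEq.of_eq (funext fun p => ?_))
          show G (T p.2 - ψ (p.1 - h)) - G (T p.2 - ψ p.1) = G (ψ p.1 - ψ (p.1 - h))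
          rw [← map_sub]
          congr 1
          abel
      _ = ∫ t, G (ψ t - ψ (t - h)) ∂Q := by
          conv_rhs => rw [← hQfst]
          rw [integral_map measurable_fst.aemeasurable hu.aestronglyMeasurable]
      _ = N Δ := by
          have hcc := ContinuousLinearMap.integral_comp_comm
            (⟨G, hGcont⟩ : (Fin k → ℝ) →L[ℝ] ℝ) hintΔ
          rw [hΔdef, ← hGΔ]
          exact hcc
  have E2 : ∫ z, φ z ∂M = lam * ∫ z, φ z ∂Ph + (1 - lam) * ∫ z, φ z ∂P0 := by
    rw [hMdef, integral_add_measure (intφPh.smul_measure ENNReal.ofReal_ne_top)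
      (intφP0.smul_measure ENNReal.ofReal_ne_top), integral_smul_measure,
      integral_smul_measure, ENNReal.toReal_ofReal hlam0, ENNReal.toReal_ofReal (by linarith),
      smul_eq_mul, smul_eq_mul]
  have E3 : ∫ z, f z * φ z ∂M = ∫ z, φ z ∂Ph := by
    have := MeasureTheory.integral_rnDeriv_smul (μ := Ph) (ν := M) ac (f := φ)
    simpa [smul_eq_mul] using this
  have E4 : ∫ z, (f z - 1) * φ z ∂M = (1 - lam) * N Δ := by
    have hsplit : ∫ z, (f z - 1) * φ z ∂M = ∫ z, f z * φ z ∂M - ∫ z, φ z ∂M := by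
      rw [← integral_sub intfφ intφM]
      refine integral_congr_ae (Filter.EventuallyEq.of_eq (funext fun z => ?_))
      ring
    rw [hsplit, E3, E2, ← E1]
    ring
  have mfφ : Measurable (fun z => (f z - 1) * φ z) := (mf.sub measurable_const).mul mφ
  have E5 : ENNReal.ofReal ((1 - lam) * N Δ)
      ≤ (∫⁻ z, ENNReal.ofReal (N (T z.1 - ψ z.2) ^ 2) ∂M) ^ (1/2:ℝ) * χ ^ (1/2:ℝ) := by
    have step1 : (1 - lam) * N Δ ≤ ∫ z, |(f z - 1) * φ z| ∂M := by
      rw [← E4]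
      calc ∫ z, (f z - 1) * φ z ∂M ≤ |∫ z, (f z - 1) * φ z ∂M| := le_abs_self _
        _ ≤ ∫ z, |(f z - 1) * φ z| ∂M := by
            simpa only [Real.norm_eq_abs] using
              norm_integral_le_integral_norm (μ := M) (fun z => (f z - 1) * φ z)
    have step2 : ∫ z, |(f z - 1) * φ z| ∂M
        = (∫⁻ z, ENNReal.ofReal |(f z - 1) * φ z| ∂M).toReal := by
      rw [integral_eq_lintegral_of_nonneg_ae (Filter.Eventually.of_forall fun z => abs_nonneg _)
        mfφ.abs.aestronglyMeasurable]
    have step3 : ENNReal.ofReal ((1 - lam) * N Δ)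
        ≤ ∫⁻ z, ENNReal.ofReal |(f z - 1) * φ z| ∂M :=
      le_trans (ENNReal.ofReal_le_ofReal (step2 ▸ step1)) ENNReal.ofReal_toReal_le
    refine step3.trans ?_
    calc ∫⁻ z, ENNReal.ofReal |(f z - 1) * φ z| ∂M
        = ∫⁻ z, ENNReal.ofReal |f z - 1| * ENNReal.ofReal |φ z| ∂M :=
          lintegral_congr fun z => by rw [abs_mul, ENNReal.ofReal_mul (abs_nonneg _)]
      _ ≤ (∫⁻ z, ENNReal.ofReal ((f z - 1) ^ 2) ∂M) ^ (1/2:ℝ)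
          * (∫⁻ z, ENNReal.ofReal (φ z ^ 2) ∂M) ^ (1/2:ℝ) :=
          hCS _ _ (mf.sub measurable_const) mφ
      _ = χ ^ (1/2:ℝ) * (∫⁻ z, ENNReal.ofReal (φ z ^ 2) ∂M) ^ (1/2:ℝ) := by rw [hχeq]
      _ = (∫⁻ z, ENNReal.ofReal (φ z ^ 2) ∂M) ^ (1/2:ℝ) * χ ^ (1/2:ℝ) := mul_comm _ _
      _ ≤ (∫⁻ z, ENNReal.ofReal (N (T z.1 - ψ z.2) ^ 2) ∂M) ^ (1/2:ℝ) * χ ^ (1/2:ℝ) :=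
          mul_le_mul_left (ENNReal.rpow_le_rpow (lintegral_mono hφsq) (by norm_num)) _
  have E6 : ENNReal.ofReal ((1 - lam) * N Δ)
      ≤ (R ^ (1/2:ℝ) + (ENNReal.ofReal lam * B) ^ (1/2:ℝ)) * χ ^ (1/2:ℝ) := by
    refine E5.trans (mul_le_mul_left ?_ _)
    calc (∫⁻ z, ENNReal.ofReal (N (T z.1 - ψ z.2) ^ 2) ∂M) ^ (1/2:ℝ)
        ≤ ((R ^ (1/2:ℝ) + (ENNReal.ofReal lam * B) ^ (1/2:ℝ)) ^ 2) ^ (1/2:ℝ) :=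
          ENNReal.rpow_le_rpow hLM (by norm_num)
      _ = R ^ (1/2:ℝ) + (ENNReal.ofReal lam * B) ^ (1/2:ℝ) := ennreal_sq_sqrt _
  have hχ0 : χ ≠ 0 := by
    intro h0
    rw [h0, ENNReal.zero_rpow_of_pos (by norm_num), mul_zero, le_zero_iff,
      ENNReal.ofReal_eq_zero] at E6
    have : (0:ℝ) < (1 - lam) * N Δ := mul_pos h1lam hNΔpos
    linarith
  -- final computation
  set S := R ^ (1/2:ℝ) + (ENNReal.ofReal lam * B) ^ (1/2:ℝ) with hSdef
  have e0 : ENNReal.ofReal (N Δ ^ 2) = (ENNReal.ofReal (N Δ)) ^ 2 :=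
    ENNReal.ofReal_pow (hNnn Δ) 2
  have key1 : ENNReal.ofReal (1 - lam) * (ENNReal.ofReal (N Δ ^ 2) / χ) ^ (1/2:ℝ) ≤ S := by
    have e1 : (ENNReal.ofReal ((1 - lam) * N Δ)) ^ 2 / χ
        = ENNReal.ofReal (1 - lam) ^ 2 * (ENNReal.ofReal (N Δ ^ 2) / χ) := by
      rw [ENNReal.ofReal_mul (by linarith), mul_pow, e0, mul_div_assoc]
    have e2 : (ENNReal.ofReal ((1 - lam) * N Δ)) ^ 2 / χ ≤ S ^ 2 := by
      calc (ENNReal.ofReal ((1 - lam) * N Δ)) ^ 2 / χ ≤ (S * χ ^ (1/2:ℝ)) ^ 2 / χ :=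
            ENNReal.div_le_div_right (pow_le_pow_left₀ (zero_le) E6 2) χ
        _ = S ^ 2 * χ / χ := by rw [mul_pow, ennreal_sqrt_sq]
        _ = S ^ 2 := by rw [mul_div_assoc, ENNReal.div_self hχ0 hχtop, mul_one]
    calc ENNReal.ofReal (1 - lam) * (ENNReal.ofReal (N Δ ^ 2) / χ) ^ (1/2:ℝ)
        = (ENNReal.ofReal (1 - lam) ^ 2) ^ (1/2:ℝ) * (ENNReal.ofReal (N Δ ^ 2) / χ) ^ (1/2:ℝ) := by
          rw [ennreal_sq_sqrt]
      _ = (ENNReal.ofReal (1 - lam) ^ 2 * (ENNReal.ofReal (N Δ ^ 2) / χ)) ^ (1/2:ℝ) := by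
          rw [ENNReal.mul_rpow_of_nonneg _ _ (by norm_num : (0:ℝ) ≤ 1/2)]
      _ = ((ENNReal.ofReal ((1 - lam) * N Δ)) ^ 2 / χ) ^ (1/2:ℝ) := by rw [e1]
      _ ≤ (S ^ 2) ^ (1/2:ℝ) := ENNReal.rpow_le_rpow e2 (by norm_num)
      _ = S := ennreal_sq_sqrt S
  calc (ENNReal.ofReal (1 - lam) * (ENNReal.ofReal (N Δ ^ 2) / χ) ^ (1/2:ℝ)
        - (ENNReal.ofReal lam * B) ^ (1/2:ℝ)) ^ 2
      ≤ (R ^ (1/2:ℝ)) ^ 2 := by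
        refine pow_le_pow_left₀ (zero_le) ?_ 2
        rw [tsub_le_iff_right, ← hSdef]
        exact key1
    _ = R := ennreal_sqrt_sq R
end

section
/- Mixture HCR bound, chi-squared case with λ = 0 (Corollary 3.4 of the paper). Let θ ↦ P_θ be a Markov kernel from ℝ^d to (𝒳,𝒜), ψ : ℝ^d → ℝ^k measurable with ∫‖ψ(t) − ψ(t−h)‖² dQ(t) < ∞, ‖·‖ a norm on ℝ^k, Q a probability measure on ℝ^d, h ∈ ℝ^d, and T : 𝒳 → ℝ^k measurable. Then, with the mixture measures ℙ₀ and ℙ_h on 𝒳 × ℝ^d, sup_{θ∈ℝ^d} E_θ‖T(X) − ψ(θ)‖² ≥ ‖∫_{ℝ^d} (ψ(t) − ψ(t−h)) dQ(t)‖² / χ²(ℙ_h ‖ ℙ₀), with the convention a/(+∞) := 0. -/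
open MeasureTheory ProbabilityTheory ENNReal
open scoped Classical

lemma seminorm_sum_le {ι : Type*} {E : Type*} [AddCommGroup E] [Module ℝ E]
    (p : Seminorm ℝ E) (s : Finset ι) (f : ι → E) :
    p (∑ i ∈ s, f i) ≤ ∑ i ∈ s, p (f i) := by
  classical
  induction s using Finset.induction_on with
  | empty => simp
  | insert _ _ hx ih =>
      rw [Finset.sum_insert hx, Finset.sum_insert hx]
      exact (map_add_le_add p _ _).trans (by linarith)

lemma seminorm_equiv (k : ℕ) (p : Seminorm ℝ (Fin k → ℝ))
    (hp : ∀ x, p x = 0 → x = 0) :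
    ∃ C : ℝ, 0 < C ∧ (∀ w, p w ≤ C * ‖w‖) ∧ (∀ w, ‖w‖ ≤ C * p w) := by
  classical
  -- upper bound
  set C₁ : ℝ := ∑ i : Fin k, p (fun j => if i = j then 1 else 0) with hC₁
  have hC₁0 : 0 ≤ C₁ := Finset.sum_nonneg fun i _ => apply_nonneg p _
  have hub : ∀ w : Fin k → ℝ, p w ≤ (C₁ + 1) * ‖w‖ := by
    intro w
    have hw : w = ∑ i : Fin k, w i • (fun j => if i = j then 1 else 0 : Fin k → ℝ) := pi_eq_sum_univ w
    calc p w = p (∑ i : Fin k, w i • (fun j => if i = j then 1 else 0 : Fin k → ℝ)) := by rw [← hw]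
    _ ≤ ∑ i : Fin k, p (w i • (fun j => if i = j then 1 else 0 : Fin k → ℝ)) := seminorm_sum_le p _ _
    _ ≤ ∑ i : Fin k, ‖w‖ * p (fun j => if i = j then 1 else 0) := by
        refine Finset.sum_le_sum fun i _ => ?_
        rw [map_smul_eq_mul]
        exact mul_le_mul_of_nonneg_right ((norm_le_pi_norm w i).trans_eq' (Real.norm_eq_abs _).symm) (apply_nonneg p _)
    _ = C₁ * ‖w‖ := by rw [← Finset.mul_sum, mul_comm]
    _ ≤ (C₁ + 1) * ‖w‖ := by nlinarith [norm_nonneg w]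
  -- continuity
  have hcont : Continuous p := by
    refine (LipschitzWith.of_dist_le_mul (K := (C₁ + 1).toNNReal) fun x y => ?_).continuous
    rw [Real.dist_eq, dist_eq_norm]
    have h1 : p x - p y ≤ p (x - y) := by
      have := map_add_le_add p (x - y) y; simp at this; linarith
    have h2 : p y - p x ≤ p (x - y) := by
      have := map_add_le_add p (y - x) x
      simp at this
      have hneg : p (y - x) = p (x - y) := by
        rw [← neg_sub x y, map_neg_eq_map]
      linarith
    have := hub (x - y)
    rw [abs_le]
    constructor
    · rw [Real.coe_toNNReal _ (by linarith)]; nlinarith [apply_nonneg p (x-y), norm_nonneg (x-y)]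
    · rw [Real.coe_toNNReal _ (by linarith)]; nlinarith
  by_cases hnt : ∃ w : Fin k → ℝ, w ≠ 0
  · obtain ⟨w₀, hw₀⟩ := hnt
    have : Nontrivial (Fin k → ℝ) := ⟨⟨w₀, 0, hw₀⟩⟩
    obtain ⟨z, hz, hzmin⟩ := (isCompact_sphere (0 : Fin k → ℝ) 1).exists_isMinOn
      (NormedSpace.sphere_nonempty.mpr zero_le_one) hcont.continuousOn
    have hz1 : ‖z‖ = 1 := by simpa using mem_sphere_zero_iff_norm.mp hz
    set m := p z with hm
    have hm0 : 0 < m := by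
      rcases (apply_nonneg p z).lt_or_eq with h | h
      · exact h
      · exfalso
        have := hp z h.symm
        rw [this] at hz1; simp at hz1
    have hlb : ∀ w, ‖w‖ ≤ (1/m) * p w := by
      intro w
      by_cases hw : w = 0
      · simp [hw, map_zero]
      · have hwn : (0:ℝ) < ‖w‖ := norm_pos_iff.mpr hw
        have hsph : (‖w‖⁻¹ • w) ∈ Metric.sphere (0 : Fin k → ℝ) 1 := by
          simp [norm_smul, abs_of_pos (inv_pos.mpr hwn), inv_mul_cancel₀ hwn.ne']
        have hle : m ≤ p (‖w‖⁻¹ • w) := hzmin hsph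
        have hps : p (‖w‖⁻¹ • w) = ‖w‖⁻¹ * p w := by
          rw [map_smul_eq_mul]; simp [abs_of_pos (inv_pos.mpr hwn)]
        rw [hps] at hle
        calc ‖w‖ ≤ ‖w‖ * (‖w‖⁻¹ * p w) / m := by
              rw [le_div_iff₀ hm0]; nlinarith
        _ = (1/m) * p w := by field_simp
    exact ⟨max (C₁ + 1) (1/m), lt_max_of_lt_left (by linarith), 
      fun w => (hub w).trans (mul_le_mul_of_nonneg_right (le_max_left _ _) (norm_nonneg _)),
      fun w => (hlb w).trans (mul_le_mul_of_nonneg_right (le_max_right _ _) (apply_nonneg p _))⟩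
  · push_neg at hnt
    refine ⟨C₁ + 1, by linarith, hub, fun w => ?_⟩
    rw [hnt w]; simp [map_zero]

lemma seminorm_continuous {k : ℕ} (p : Seminorm ℝ (Fin k → ℝ)) {C : ℝ} (hC : 0 ≤ C)
    (hub : ∀ w, p w ≤ C * ‖w‖) : Continuous p := by
  refine (LipschitzWith.of_dist_le_mul (K := C.toNNReal) fun x y => ?_).continuous
  rw [Real.dist_eq, dist_eq_norm]
  have h1 : p x - p y ≤ p (x - y) := by
    have := map_add_le_add p (x - y) y; simp at this; linarith
  have h2 : p y - p x ≤ p (x - y) := by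
    have := map_add_le_add p (y - x) x
    simp at this
    have hneg : p (y - x) = p (x - y) := by rw [← neg_sub x y, map_neg_eq_map]
    linarith
  have := hub (x - y)
  rw [abs_le, Real.coe_toNNReal _ hC]
  exact ⟨by nlinarith [apply_nonneg p (x - y), norm_nonneg (x - y)], by nlinarith⟩

lemma exists_dual_s3 (k : ℕ) (p : Seminorm ℝ (Fin k → ℝ)) (v : Fin k → ℝ) :
    ∃ ℓ : (Fin k → ℝ) →ₗ[ℝ] ℝ, ℓ v = p v ∧ ∀ w, |ℓ w| ≤ p w := by
  by_cases hv : v = 0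
  · refine ⟨0, by simp [hv], fun w => by simpa using apply_nonneg p w⟩
  · set f := LinearPMap.mkSpanSingleton (K := ℝ) (L := ℝ) (σ := RingHom.id ℝ) v (p v) hv with hf
    have hfle : ∀ x : f.domain, f x ≤ p x := by
      rintro ⟨x, hx⟩
      rcases Submodule.mem_span_singleton.mp hx with ⟨a, rfl⟩
      have happ : f ⟨a • v, hx⟩ = a • p v := LinearPMap.mkSpanSingleton'_apply _ _ _ a hx
      rw [happ, map_smul_eq_mul]
      have h0 := apply_nonneg p v
      have h1 : a • p v = a * p v := rfl
      rw [h1]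
      rw [Real.norm_eq_abs]
      exact mul_le_mul_of_nonneg_right (le_abs_self a) h0
    obtain ⟨g, hg1, hg2⟩ := exists_extension_of_le_sublinear f p
      (fun c hc x => by rw [map_smul_eq_mul, Real.norm_eq_abs, abs_of_pos hc]) (map_add_le_add p) hfle
    refine ⟨g, ?_, fun w => ?_⟩
    · have h2 : f ⟨v, Submodule.mem_span_singleton_self v⟩ = p v :=
        LinearPMap.mkSpanSingleton_apply ℝ ℝ hv (p v)
      exact (hg1 ⟨v, Submodule.mem_span_singleton_self v⟩).trans h2
    · rw [abs_le]
      refine ⟨?_, hg2 w⟩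
      have := hg2 (-w)
      rw [map_neg, map_neg_eq_map] at this
      linarith

lemma integrable_of_sq {α : Type*} [MeasurableSpace α] {μ : Measure α} [IsFiniteMeasure μ]
    {u : α → ℝ} (hm : AEStronglyMeasurable u μ)
    (hbound : ∫⁻ z, ENNReal.ofReal (u z ^ 2) ∂μ ≠ ⊤) : Integrable u μ := by
  refine ⟨hm, ?_⟩
  have hpt : ∀ z, (‖u z‖₊ : ℝ≥0∞) ≤ ENNReal.ofReal (u z ^ 2) + 1 := by
    intro z
    rw [show ((‖u z‖₊ : ℝ≥0∞)) = ENNReal.ofReal ‖u z‖ from (ofReal_norm _).symm, Real.norm_eq_abs]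
    have h1 : |u z| ≤ u z ^ 2 + 1 := by nlinarith [sq_abs (u z), abs_nonneg (u z), sq_nonneg (|u z| - 1)]
    calc ENNReal.ofReal |u z| ≤ ENNReal.ofReal (u z ^ 2 + 1) := ENNReal.ofReal_le_ofReal h1
    _ = ENNReal.ofReal (u z ^ 2) + 1 := by
        rw [ENNReal.ofReal_add (sq_nonneg _) zero_le_one, ENNReal.ofReal_one]
  show (∫⁻ z, (‖u z‖₊ : ℝ≥0∞) ∂μ) < ⊤
  calc ∫⁻ z, (‖u z‖₊ : ℝ≥0∞) ∂μ ≤ ∫⁻ z, (ENNReal.ofReal (u z ^ 2) + 1) ∂μ :=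
        lintegral_mono hpt
  _ = (∫⁻ z, ENNReal.ofReal (u z ^ 2) ∂μ) + μ Set.univ := by
        rw [lintegral_add_right _ measurable_const, lintegral_one]
  _ < ⊤ := ENNReal.add_lt_top.mpr ⟨hbound.lt_top, measure_lt_top μ _⟩

/-- **Mixture HCR bound, chi-squared case with λ = 0 (Corollary 3.4).**
Division satisfies the convention `a / ∞ = 0`. -/
theorem mixture_HCR_chiSq_lambda_zero
    {𝒳 : Type*} [MeasurableSpace 𝒳] (d k : ℕ)
    (κ : Kernel (Fin d → ℝ) 𝒳) [IsMarkovKernel κ]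
    (ψ : (Fin d → ℝ) → (Fin k → ℝ)) (hψ : Measurable ψ)
    -- an arbitrary norm `N` on `ℝ^k`
    (N : (Fin k → ℝ) → ℝ)
    (hN_add : ∀ x y, N (x + y) ≤ N x + N y)
    (hN_smul : ∀ (c : ℝ) (x), N (c • x) = |c| * N x)
    (hN_eq_zero : ∀ x, N x = 0 ↔ x = 0)
    (Q : Measure (Fin d → ℝ)) [IsProbabilityMeasure Q]
    (h : Fin d → ℝ)
    (T : 𝒳 → (Fin k → ℝ)) (hT : Measurable T)
    (hB : (∫⁻ t, ENNReal.ofReal ((N (ψ t - ψ (t - h))) ^ 2) ∂Q) ≠ ⊤) :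
    (⨆ θ, ∫⁻ x, ENNReal.ofReal ((N (T x - ψ θ)) ^ 2) ∂(κ θ))
      ≥ ENNReal.ofReal ((N (∫ t, (ψ t - ψ (t - h)) ∂Q)) ^ 2)
          / chiSq (mixShift κ Q h) (mixZero κ Q) := by
  classical
  -- the seminorm package
  let p : Seminorm ℝ (Fin k → ℝ) :=
    { toFun := N
      map_zero' := (hN_eq_zero 0).mpr rfl
      add_le' := hN_add
      neg' := fun x => by
        show N (-x) = N x
        have := hN_smul (-1) x
        simpa using this
      smul' := fun c x => by
        show N (c • x) = ‖c‖ * N x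
        rw [hN_smul, Real.norm_eq_abs] }
  have hpN : ∀ x, p x = N x := fun x => rfl
  have hN0 : ∀ x, 0 ≤ N x := fun x => apply_nonneg p x
  obtain ⟨C, hCpos, hub, hlb⟩ := seminorm_equiv k p (fun x hx => (hN_eq_zero x).mp hx)
  have hNcont : Continuous N := seminorm_continuous p hCpos.le hub
  set g : (Fin d → ℝ) → (Fin k → ℝ) := fun t => ψ t - ψ (t - h) with hgdef
  set v : Fin k → ℝ := ∫ t, g t ∂Q with hvdef
  set S := ⨆ θ, ∫⁻ x, ENNReal.ofReal ((N (T x - ψ θ)) ^ 2) ∂(κ θ) with hSdef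
  set Pz := mixZero κ Q with hPzdef
  set Ps := mixShift κ Q h with hPsdef
  rw [ge_iff_le]
  by_cases hNv : N v = 0
  · rw [hNv]; simp
  by_cases hχtop : chiSq Ps Pz = ⊤
  · rw [hχtop]; simp
  by_cases hStop : S = ⊤
  · rw [hStop]; exact le_top
  -- absolute continuity & finite chi-square
  have hac : Ps ≪ Pz := by
    by_contra hcon
    rw [chiSq, if_neg hcon] at hχtop
    exact hχtop rfl
  have hχ : chiSq Ps Pz
      = ∫⁻ x, ENNReal.ofReal (((Ps.rnDeriv Pz x).toReal - 1) ^ 2) ∂Pz := by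
    rw [chiSq, if_pos hac]
  -- measurability
  have hmap2 : Measurable (fun z : 𝒳 × (Fin d → ℝ) => (z.1, z.2 - h)) :=
    measurable_fst.prodMk (measurable_snd.sub measurable_const)
  have hgm : Measurable g := hψ.sub (hψ.comp (measurable_id.sub measurable_const))
  have hfm : Measurable (fun z : 𝒳 × (Fin d → ℝ) => T z.1 - ψ z.2) :=
    (hT.comp measurable_fst).sub (hψ.comp measurable_snd)
  -- probability instances
  haveI hPzP : IsProbabilityMeasure Pz := by
    rw [hPzdef, mixZero]; exact Measure.isProbabilityMeasure_map measurable_swap.aemeasurable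
  haveI hPsP : IsProbabilityMeasure Ps := by
    rw [hPsdef, mixShift]; exact Measure.isProbabilityMeasure_map hmap2.aemeasurable
  -- lintegral decompositions
  have hlint0 : ∀ {φ : 𝒳 × (Fin d → ℝ) → ℝ≥0∞}, Measurable φ →
      ∫⁻ z, φ z ∂Pz = ∫⁻ t, ∫⁻ x, φ (x, t) ∂(κ t) ∂Q := by
    intro φ hφ
    rw [hPzdef, mixZero, lintegral_map hφ measurable_swap,
      Measure.lintegral_compProd (f := fun a => φ a.swap) (hφ.comp measurable_swap)]
    rfl
  have hlinth : ∀ {φ : 𝒳 × (Fin d → ℝ) → ℝ≥0∞}, Measurable φ →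
      ∫⁻ z, φ z ∂Ps = ∫⁻ z, φ (z.1, z.2 - h) ∂Pz := by
    intro φ hφ
    rw [hPsdef, mixShift, lintegral_map hφ hmap2]
  have hmarg : ∀ {φ : (Fin d → ℝ) → ℝ≥0∞}, Measurable φ →
      ∫⁻ z, φ z.2 ∂Pz = ∫⁻ t, φ t ∂Q := by
    intro φ hφ
    rw [hlint0 (φ := fun z => φ z.2) (hφ.comp measurable_snd)]
    simp
  have hsnd : Pz.map Prod.snd = Q := by
    rw [hPzdef, mixZero, Measure.map_map measurable_snd measurable_swap]
    have h2 : (Prod.snd ∘ Prod.swap : (Fin d → ℝ) × 𝒳 → (Fin d → ℝ)) = Prod.fst := rfl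
    rw [h2]
    exact Measure.fst_compProd Q κ
  -- the dual functional
  obtain ⟨ℓ, hℓv, hℓle⟩ := exists_dual_s3 k p v
  set L : (Fin k → ℝ) →L[ℝ] ℝ := LinearMap.toContinuousLinearMap ℓ with hLdef
  have hLapp : ∀ w, L w = ℓ w := fun w => rfl
  set u : 𝒳 × (Fin d → ℝ) → ℝ := fun z => L (T z.1 - ψ z.2) with hudef
  have hum : Measurable u := L.continuous.measurable.comp hfm
  have hule : ∀ z, |u z| ≤ N (T z.1 - ψ z.2) := fun z => hℓle _
  have hΦm : Measurable (fun z : 𝒳 × (Fin d → ℝ) => ENNReal.ofReal (N (T z.1 - ψ z.2) ^ 2)) :=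
    ((hNcont.measurable.comp hfm).pow_const 2).ennreal_ofReal
  have hlintS : ∫⁻ z, ENNReal.ofReal (N (T z.1 - ψ z.2) ^ 2) ∂Pz ≤ S := by
    rw [hlint0 hΦm]
    calc ∫⁻ t, ∫⁻ x, ENNReal.ofReal (N (T x - ψ t) ^ 2) ∂(κ t) ∂Q
        ≤ ∫⁻ _, S ∂Q := lintegral_mono fun t =>
          le_iSup (fun θ => ∫⁻ x, ENNReal.ofReal (N (T x - ψ θ) ^ 2) ∂(κ θ)) t
    _ = S := by simp
  have hu2pt : ∀ z, ENNReal.ofReal (u z ^ 2) ≤ ENNReal.ofReal (N (T z.1 - ψ z.2) ^ 2) := by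
    intro z
    apply ENNReal.ofReal_le_ofReal
    rw [← sq_abs (u z)]
    exact pow_le_pow_left₀ (abs_nonneg _) (hule z) 2
  have hu2m : Measurable fun z => ENNReal.ofReal (u z ^ 2) := (hum.pow_const 2).ennreal_ofReal
  have hu2z : ∫⁻ z, ENNReal.ofReal (u z ^ 2) ∂Pz ≤ S := (lintegral_mono hu2pt).trans hlintS
  have hu_int0 : Integrable u Pz :=
    integrable_of_sq hum.aestronglyMeasurable (hu2z.trans_lt (lt_top_iff_ne_top.mpr hStop)).ne
  have huh_pt : ∀ z : 𝒳 × (Fin d → ℝ), u (z.1, z.2 - h) = u z + L (g z.2) := by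
    intro z
    show L (T z.1 - ψ (z.2 - h)) = L (T z.1 - ψ z.2) + L (ψ z.2 - ψ (z.2 - h))
    rw [← map_add]
    congr 1
    abel
  have hLgm : Measurable fun t => L (g t) := L.continuous.measurable.comp hgm
  have hLg2pt : ∀ t, ENNReal.ofReal ((L (g t)) ^ 2) ≤ ENNReal.ofReal (N (g t) ^ 2) := by
    intro t
    apply ENNReal.ofReal_le_ofReal
    rw [← sq_abs (L (g t))]
    exact pow_le_pow_left₀ (abs_nonneg _) (hℓle _) 2
  have hu2h : ∫⁻ z, ENNReal.ofReal (u z ^ 2) ∂Ps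
      ≤ 2 * S + 2 * ∫⁻ t, ENNReal.ofReal (N (g t) ^ 2) ∂Q := by
    rw [hlinth hu2m]
    have hpt : ∀ z : 𝒳 × (Fin d → ℝ), ENNReal.ofReal (u (z.1, z.2 - h) ^ 2)
        ≤ 2 * ENNReal.ofReal (u z ^ 2) + 2 * ENNReal.ofReal ((L (g z.2)) ^ 2) := by
      intro z
      rw [huh_pt z]
      calc ENNReal.ofReal ((u z + L (g z.2)) ^ 2)
          ≤ ENNReal.ofReal (2 * u z ^ 2 + 2 * (L (g z.2)) ^ 2) :=
            ENNReal.ofReal_le_ofReal (by nlinarith [sq_nonneg (u z - L (g z.2))])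
      _ = ENNReal.ofReal (2 * u z ^ 2) + ENNReal.ofReal (2 * (L (g z.2)) ^ 2) :=
            ENNReal.ofReal_add (by positivity) (by positivity)
      _ = 2 * ENNReal.ofReal (u z ^ 2) + 2 * ENNReal.ofReal ((L (g z.2)) ^ 2) := by
            rw [ENNReal.ofReal_mul (by norm_num : (0:ℝ) ≤ 2),
              ENNReal.ofReal_mul (by norm_num : (0:ℝ) ≤ 2)]
            norm_num
    have hm2 : Measurable fun z : 𝒳 × (Fin d → ℝ) => ENNReal.ofReal ((L (g z.2)) ^ 2) :=
      ((hLgm.comp measurable_snd).pow_const 2).ennreal_ofReal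
    calc ∫⁻ z, ENNReal.ofReal (u (z.1, z.2 - h) ^ 2) ∂Pz
        ≤ ∫⁻ z, (2 * ENNReal.ofReal (u z ^ 2) + 2 * ENNReal.ofReal ((L (g z.2)) ^ 2)) ∂Pz :=
          lintegral_mono hpt
    _ = 2 * ∫⁻ z, ENNReal.ofReal (u z ^ 2) ∂Pz
        + 2 * ∫⁻ z, ENNReal.ofReal ((L (g z.2)) ^ 2) ∂Pz := by
          rw [lintegral_add_left (hu2m.const_mul 2), lintegral_const_mul 2 hu2m,
            lintegral_const_mul 2 hm2]
    _ ≤ 2 * S + 2 * ∫⁻ t, ENNReal.ofReal (N (g t) ^ 2) ∂Q := by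
          refine add_le_add (mul_le_mul_right hu2z 2) (mul_le_mul_right ?_ 2)
          rw [hmarg (φ := fun t => ENNReal.ofReal ((L (g t)) ^ 2)) (hLgm.pow_const 2).ennreal_ofReal]
          exact lintegral_mono hLg2pt
  have hu_inth : Integrable u Ps := by
    refine integrable_of_sq hum.aestronglyMeasurable ?_
    refine (hu2h.trans_lt ?_).ne
    refine ENNReal.add_lt_top.mpr ⟨?_, ?_⟩
    · exact ENNReal.mul_lt_top (by norm_num) (lt_top_iff_ne_top.mpr hStop)
    · exact ENNReal.mul_lt_top (by norm_num) (lt_top_iff_ne_top.mpr hB)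
  -- g is integrable
  have hg_int : Integrable g Q := by
    refine ⟨hgm.aestronglyMeasurable, ?_⟩
    show (∫⁻ t, (‖g t‖₊ : ℝ≥0∞) ∂Q) < ⊤
    have hpt : ∀ t, (‖g t‖₊ : ℝ≥0∞) ≤ ENNReal.ofReal C * (ENNReal.ofReal (N (g t) ^ 2) + 1) := by
      intro t
      rw [show ((‖g t‖₊ : ℝ≥0∞)) = ENNReal.ofReal ‖g t‖ from (ofReal_norm _).symm]
      have h1 : ‖g t‖ ≤ C * (N (g t) ^ 2 + 1) := by
        have h2 := hlb (g t)
        have h3 : N (g t) ≤ N (g t) ^ 2 + 1 := by nlinarith [sq_nonneg (N (g t) - 1)]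
        have h4 : p (g t) = N (g t) := hpN _
        nlinarith [hN0 (g t)]
      calc ENNReal.ofReal ‖g t‖ ≤ ENNReal.ofReal (C * (N (g t) ^ 2 + 1)) :=
            ENNReal.ofReal_le_ofReal h1
      _ = ENNReal.ofReal C * ENNReal.ofReal (N (g t) ^ 2 + 1) := ENNReal.ofReal_mul hCpos.le
      _ = ENNReal.ofReal C * (ENNReal.ofReal (N (g t) ^ 2) + 1) := by
          rw [ENNReal.ofReal_add (sq_nonneg _) zero_le_one, ENNReal.ofReal_one]
    have hNg2m : Measurable fun t => ENNReal.ofReal (N (g t) ^ 2) :=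
      (((hNcont.measurable.comp hgm)).pow_const 2).ennreal_ofReal
    calc (∫⁻ t, (‖g t‖₊ : ℝ≥0∞) ∂Q)
        ≤ ∫⁻ t, ENNReal.ofReal C * (ENNReal.ofReal (N (g t) ^ 2) + 1) ∂Q := lintegral_mono hpt
    _ = ENNReal.ofReal C * ((∫⁻ t, ENNReal.ofReal (N (g t) ^ 2) ∂Q) + 1) := by
        rw [lintegral_const_mul _ (hNg2m.add_const 1),
          lintegral_add_right _ measurable_const, lintegral_one, measure_univ]
    _ < ⊤ := ENNReal.mul_lt_top ENNReal.ofReal_lt_top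
        (ENNReal.add_lt_top.mpr ⟨lt_top_iff_ne_top.mpr hB, ENNReal.one_lt_top⟩)
  -- rn derivative
  set ρ : 𝒳 × (Fin d → ℝ) → ℝ := fun z => (Ps.rnDeriv Pz z).toReal with hρdef
  have hρm : Measurable ρ := (Measure.measurable_rnDeriv Ps Pz).ennreal_toReal
  have hρu_int : Integrable (fun z => ρ z • u z) Pz :=
    (integrable_rnDeriv_smul_iff hac).mpr hu_inth
  -- the key identity
  have hkey : ∫ z, (ρ z - 1) * u z ∂Pz = N v := by
    have h1 : ∫ z, ρ z • u z ∂Pz = ∫ z, u z ∂Ps := integral_rnDeriv_smul hac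
    have h2 : ∫ z, u z ∂Ps = ∫ z, u (z.1, z.2 - h) ∂Pz := by
      rw [hPsdef, mixShift, integral_map hmap2.aemeasurable hum.aestronglyMeasurable]
    have h3 : ∫ z, u (z.1, z.2 - h) ∂Pz = ∫ z, (u z + L (g z.2)) ∂Pz := by
      congr 1
      funext z
      exact huh_pt z
    have h4 : Integrable (fun z : 𝒳 × (Fin d → ℝ) => L (g z.2)) Pz := by
      have h5 : Integrable (fun t => L (g t)) Q := L.integrable_comp hg_int
      rw [← hsnd] at h5
      exact (integrable_map_measure (hLgm.aestronglyMeasurable)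
        measurable_snd.aemeasurable).mp h5
    have h5 : ∫ z, (u z + L (g z.2)) ∂Pz = ∫ z, u z ∂Pz + ∫ z, L (g z.2) ∂Pz :=
      integral_add hu_int0 h4
    have h6 : ∫ z, L (g z.2) ∂Pz = ∫ t, L (g t) ∂Q := by
      conv_rhs => rw [← hsnd]
      rw [integral_map measurable_snd.aemeasurable hLgm.aestronglyMeasurable]
    have h7 : ∫ t, L (g t) ∂Q = L v := L.integral_comp_comm hg_int
    have h8 : ∫ z, (ρ z - 1) * u z ∂Pz = ∫ z, ρ z • u z ∂Pz - ∫ z, u z ∂Pz := by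
      rw [← integral_sub hρu_int hu_int0]
      congr 1
      funext z
      simp only [smul_eq_mul]
      ring
    have h9 : L v = N v := by rw [hLapp, hℓv, hpN]
    rw [h8, h1, h2, h3, h5, h6, h7, h9]
    ring
  -- Cauchy-Schwarz via Hoelder
  set F : 𝒳 × (Fin d → ℝ) → ℝ≥0∞ := fun z => ENNReal.ofReal |ρ z - 1| with hFdef
  set G : 𝒳 × (Fin d → ℝ) → ℝ≥0∞ := fun z => ENNReal.ofReal |u z| with hGdef
  have hFm : Measurable F := ((hρm.sub measurable_const).abs).ennreal_ofReal
  have hGm : Measurable G := (hum.abs).ennreal_ofReal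
  have hconj : Real.HolderConjugate 2 2 := Real.HolderConjugate.two_two
  have hCS := ENNReal.lintegral_mul_le_Lp_mul_Lq Pz hconj hFm.aemeasurable hGm.aemeasurable
  have hF2 : ∫⁻ z, F z ^ (2:ℝ) ∂Pz = chiSq Ps Pz := by
    rw [hχ]
    congr 1
    funext z
    rw [hFdef]
    rw [ENNReal.ofReal_rpow_of_nonneg (abs_nonneg _) (by norm_num : (0:ℝ) ≤ 2)]
    congr 1
    rw [show ((2:ℝ)) = ((2:ℕ):ℝ) by norm_num, Real.rpow_natCast, sq_abs]
  have hG2 : ∫⁻ z, G z ^ (2:ℝ) ∂Pz ≤ S := by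
    have hptG : ∀ z, G z ^ (2:ℝ) = ENNReal.ofReal (u z ^ 2) := by
      intro z
      rw [hGdef]
      rw [ENNReal.ofReal_rpow_of_nonneg (abs_nonneg _) (by norm_num : (0:ℝ) ≤ 2)]
      congr 1
      rw [show ((2:ℝ)) = ((2:ℕ):ℝ) by norm_num, Real.rpow_natCast, sq_abs]
    calc ∫⁻ z, G z ^ (2:ℝ) ∂Pz = ∫⁻ z, ENNReal.ofReal (u z ^ 2) ∂Pz := by
          congr 1; funext z; exact hptG z
    _ ≤ S := hu2z
  have hint : Integrable (fun z => (ρ z - 1) * u z) Pz := by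
    refine (hρu_int.sub hu_int0).congr (Filter.Eventually.of_forall fun z => ?_)
    simp only [Pi.sub_apply, smul_eq_mul]
    ring
  have habs : N v ≤ ∫ z, |(ρ z - 1) * u z| ∂Pz := by
    rw [← hkey]
    calc ∫ z, (ρ z - 1) * u z ∂Pz ≤ |∫ z, (ρ z - 1) * u z ∂Pz| := le_abs_self _
    _ = ‖∫ z, (ρ z - 1) * u z ∂Pz‖ := (Real.norm_eq_abs _).symm
    _ ≤ ∫ z, ‖(ρ z - 1) * u z‖ ∂Pz := norm_integral_le_integral_norm _
    _ = ∫ z, |(ρ z - 1) * u z| ∂Pz := by simp only [Real.norm_eq_abs]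
  have hprod : ENNReal.ofReal (N v) ≤ ∫⁻ z, (F * G) z ∂Pz := by
    calc ENNReal.ofReal (N v) ≤ ENNReal.ofReal (∫ z, |(ρ z - 1) * u z| ∂Pz) :=
          ENNReal.ofReal_le_ofReal habs
    _ = ∫⁻ z, ENNReal.ofReal |(ρ z - 1) * u z| ∂Pz :=
          ofReal_integral_eq_lintegral_ofReal hint.abs
            (Filter.Eventually.of_forall fun z => abs_nonneg _)
    _ = ∫⁻ z, (F * G) z ∂Pz := by
          congr 1
          funext z
          rw [Pi.mul_apply, hFdef, hGdef, ← ENNReal.ofReal_mul (abs_nonneg _), abs_mul]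
  have hmain : ENNReal.ofReal (N v ^ 2) ≤ S * chiSq Ps Pz := by
    have h10 : ENNReal.ofReal (N v) ≤ (chiSq Ps Pz) ^ (1/2:ℝ) * S ^ (1/2:ℝ) := by
      refine (hprod.trans hCS).trans ?_
      rw [hF2]
      simp only [one_div]
      exact mul_le_mul_right (ENNReal.rpow_le_rpow hG2 (by norm_num)) _
    have h11 : ENNReal.ofReal (N v ^ 2) = ENNReal.ofReal (N v) ^ (2:ℝ) := by
      rw [ENNReal.ofReal_rpow_of_nonneg (hN0 v) (by norm_num : (0:ℝ) ≤ 2)]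
      congr 1
      rw [show ((2:ℝ)) = ((2:ℕ):ℝ) by norm_num, Real.rpow_natCast]
    rw [h11]
    calc ENNReal.ofReal (N v) ^ (2:ℝ)
        ≤ ((chiSq Ps Pz) ^ (1/2:ℝ) * S ^ (1/2:ℝ)) ^ (2:ℝ) :=
          ENNReal.rpow_le_rpow h10 (by norm_num)
    _ = chiSq Ps Pz * S := by
        rw [ENNReal.mul_rpow_of_nonneg _ _ (by norm_num : (0:ℝ) ≤ 2),
          ← ENNReal.rpow_mul, ← ENNReal.rpow_mul]
        norm_num
    _ = S * chiSq Ps Pz := mul_comm _ _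
  exact ENNReal.div_le_of_le_mul hmain
end

section
/- Sharpened two-point Hellinger risk bound (Lemma 3.6 of the paper, refining Theorem 6.1 of Ibragimov–Has'minskii). Let {P_θ : θ ∈ Θ} be a family of probability measures on (𝒳,𝒜), ψ : Θ → ℝ a function, and T : 𝒳 → ℝ measurable. Then for every θ₁, θ₂ ∈ Θ: (1/2)( E_{θ₁}|T(X) − ψ(θ₁)|² + E_{θ₂}|T(X) − ψ(θ₂)|² ) ≥ [ (1 − H²(P_{θ₁}, P_{θ₂}))/4 ]₊ · |ψ(θ₁) − ψ(θ₂)|². Consequently, inf_T sup_{θ∈Θ} E_θ|T(X) − ψ(θ)|² ≥ sup_{θ₁,θ₂∈Θ} [ (1 − H²(P_{θ₁}, P_{θ₂}))/4 ]₊ |ψ(θ₁) − ψ(θ₂)|², the infimum being over measurable T : 𝒳 → ℝ. -/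
open MeasureTheory ProbabilityTheory ENNReal

section AuxCS

variable {α : Type*} [MeasurableSpace α] {μ : Measure α}

lemma integrable_mul_of_memL2 {u v : α → ℝ} (hu : MemLp u 2 μ) (hv : MemLp v 2 μ) :
    Integrable (fun x => u x * v x) μ := by
  refine Integrable.mono' ((hu.integrable_sq.add hv.integrable_sq).div_const 2)
    (hu.1.mul hv.1) (Filter.Eventually.of_forall fun x => ?_)
  rw [Real.norm_eq_abs, abs_mul]
  simp only [Pi.add_apply]
  nlinarith [sq_nonneg (|u x| - |v x|), sq_abs (u x), sq_abs (v x)]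

lemma integral_mul_le_sqrt_mul_sqrt {u v : α → ℝ} (hu0 : ∀ x, 0 ≤ u x) (hv0 : ∀ x, 0 ≤ v x)
    (hu : MemLp u 2 μ) (hv : MemLp v 2 μ) :
    ∫ x, u x * v x ∂μ ≤ Real.sqrt (∫ x, u x ^ 2 ∂μ) * Real.sqrt (∫ x, v x ^ 2 ∂μ) := by
  have h2 : (2 : ℝ).HolderConjugate 2 := by constructor <;> norm_num
  have hof : (ENNReal.ofReal (2 : ℝ)) = 2 := by simp
  have h := integral_mul_le_Lp_mul_Lq_of_nonneg h2 (Filter.Eventually.of_forall hu0)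
    (Filter.Eventually.of_forall hv0) (hof ▸ hu) (hof ▸ hv)
  have hru : ∀ x, u x ^ (2 : ℝ) = u x ^ 2 := fun x => Real.rpow_two (u x)
  have hrv : ∀ x, v x ^ (2 : ℝ) = v x ^ 2 := fun x => Real.rpow_two (v x)
  simp only [hru, hrv] at h
  rw [Real.sqrt_eq_rpow, Real.sqrt_eq_rpow]
  exact h

end AuxCS

/-- The squared Hellinger distance `H²(P, P')`, computed with the common dominating
measure `P + P'`; it does not depend on the choice of dominating measure. -/
noncomputable def hellingerSq {α : Type*} [MeasurableSpace α] (P P' : Measure α) : ℝ :=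
  ∫ x, (Real.sqrt ((P.rnDeriv (P + P')) x).toReal
        - Real.sqrt ((P'.rnDeriv (P + P')) x).toReal) ^ 2 ∂(P + P')

set_option maxHeartbeats 1000000 in
/-- **Sharpened two-point Hellinger risk bound (Lemma 3.6).** -/
theorem two_point_hellinger_bound
    {𝒳 Θ : Type*} [MeasurableSpace 𝒳]
    (P : Θ → Measure 𝒳) (hP : ∀ θ, IsProbabilityMeasure (P θ))
    (ψ : Θ → ℝ) :
    (∀ (T : 𝒳 → ℝ), Measurable T → ∀ θ₁ θ₂ : Θ,
      ENNReal.ofReal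
          (max ((1 - hellingerSq (P θ₁) (P θ₂)) / 4) 0 * (ψ θ₁ - ψ θ₂) ^ 2)
        ≤ (1/2 : ℝ≥0∞) *
            ((∫⁻ x, ENNReal.ofReal ((T x - ψ θ₁) ^ 2) ∂(P θ₁))
              + ∫⁻ x, ENNReal.ofReal ((T x - ψ θ₂) ^ 2) ∂(P θ₂)))
    ∧ (⨅ (T : 𝒳 → ℝ) (_ : Measurable T), ⨆ θ, ∫⁻ x, ENNReal.ofReal ((T x - ψ θ) ^ 2) ∂(P θ))
        ≥ ⨆ θ₁, ⨆ θ₂,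
            ENNReal.ofReal
              (max ((1 - hellingerSq (P θ₁) (P θ₂)) / 4) 0 * (ψ θ₁ - ψ θ₂) ^ 2) := by
  have main : ∀ (T : 𝒳 → ℝ), Measurable T → ∀ θ₁ θ₂ : Θ,
      ENNReal.ofReal
          (max ((1 - hellingerSq (P θ₁) (P θ₂)) / 4) 0 * (ψ θ₁ - ψ θ₂) ^ 2)
        ≤ (1/2 : ℝ≥0∞) *
            ((∫⁻ x, ENNReal.ofReal ((T x - ψ θ₁) ^ 2) ∂(P θ₁))
              + ∫⁻ x, ENNReal.ofReal ((T x - ψ θ₂) ^ 2) ∂(P θ₂)) := by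
    intro T hT θ₁ θ₂
    haveI := hP θ₁
    haveI := hP θ₂
    set H : ℝ := hellingerSq (P θ₁) (P θ₂) with hHdef
    rcases le_or_gt (1 - H) 0 with hneg | hpos
    · rw [max_eq_right (by linarith : (1 - H) / 4 ≤ 0), zero_mul, ENNReal.ofReal_zero]
      exact bot_le
    set ν : Measure 𝒳 := P θ₁ + P θ₂ with hν
    haveI : IsFiniteMeasure ν := by rw [hν]; infer_instance
    have hac1 : P θ₁ ≪ ν := by
      rw [hν]; exact Measure.absolutelyContinuous_of_le (Measure.le_add_right le_rfl)
    have hac2 : P θ₂ ≪ ν := by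
      rw [hν]; exact Measure.absolutelyContinuous_of_le (Measure.le_add_left le_rfl)
    set f : 𝒳 → ℝ := fun x => ((P θ₁).rnDeriv ν x).toReal with hfdef
    set g : 𝒳 → ℝ := fun x => ((P θ₂).rnDeriv ν x).toReal with hgdef
    have hfm : Measurable f := (Measure.measurable_rnDeriv _ _).ennreal_toReal
    have hgm : Measurable g := (Measure.measurable_rnDeriv _ _).ennreal_toReal
    have hf0 : ∀ x, 0 ≤ f x := fun x => ENNReal.toReal_nonneg
    have hg0 : ∀ x, 0 ≤ g x := fun x => ENNReal.toReal_nonneg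
    have hfi : Integrable f ν := Measure.integrable_toReal_rnDeriv
    have hgi : Integrable g ν := Measure.integrable_toReal_rnDeriv
    have hfint : ∫ x, f x ∂ν = 1 := by
      rw [hfdef, Measure.integral_toReal_rnDeriv hac1]; simp
    have hgint : ∫ x, g x ∂ν = 1 := by
      rw [hgdef, Measure.integral_toReal_rnDeriv hac2]; simp
    set sf : 𝒳 → ℝ := fun x => Real.sqrt (f x) with hsfdef
    set sg : 𝒳 → ℝ := fun x => Real.sqrt (g x) with hsgdef
    have hsf0 : ∀ x, 0 ≤ sf x := fun x => Real.sqrt_nonneg _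
    have hsg0 : ∀ x, 0 ≤ sg x := fun x => Real.sqrt_nonneg _
    have hsfsq : (fun x => sf x ^ 2) = f := funext fun x => Real.sq_sqrt (hf0 x)
    have hsgsq : (fun x => sg x ^ 2) = g := funext fun x => Real.sq_sqrt (hg0 x)
    have hsf2 : MemLp sf 2 ν :=
      (memLp_two_iff_integrable_sq hfm.sqrt.aestronglyMeasurable).2 (by rw [hsfsq]; exact hfi)
    have hsg2 : MemLp sg 2 ν :=
      (memLp_two_iff_integrable_sq hgm.sqrt.aestronglyMeasurable).2 (by rw [hsgsq]; exact hgi)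
    set S : ℝ := ∫ x, sf x * sg x ∂ν with hSdef
    have hS0 : 0 ≤ S :=
      integral_nonneg fun x => mul_nonneg (hsf0 x) (hsg0 x)
    have hSint : Integrable (fun x => sf x * sg x) ν := integrable_mul_of_memL2 hsf2 hsg2
    have hH : H = 2 - 2 * S := by
      have h0 : H = ∫ x, (sf x - sg x) ^ 2 ∂ν := rfl
      have hexp : (fun x => (sf x - sg x) ^ 2)
          = fun x => (f x + g x) - 2 * (sf x * sg x) := funext fun x => by
        have h1 : sf x ^ 2 = f x := Real.sq_sqrt (hf0 x)
        have h2 : sg x ^ 2 = g x := Real.sq_sqrt (hg0 x)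
        nlinarith [h1, h2]
      have e1 : ∫ x, (f x + g x - 2 * (sf x * sg x)) ∂ν
          = (∫ x, (f x + g x) ∂ν) - ∫ x, 2 * (sf x * sg x) ∂ν :=
        integral_sub (hfi.add hgi) (hSint.const_mul 2)
      have e2 : ∫ x, (f x + g x) ∂ν = (∫ x, f x ∂ν) + ∫ x, g x ∂ν := integral_add hfi hgi
      have e3 : ∫ x, 2 * (sf x * sg x) ∂ν = 2 * S := by
        rw [hSdef]; exact integral_const_mul 2 _
      rw [h0, hexp, e1, e2, e3, hfint, hgint]
      norm_num
    -- finiteness of the risks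
    by_cases hA : (∫⁻ x, ENNReal.ofReal ((T x - ψ θ₁) ^ 2) ∂(P θ₁)) = ⊤
    · have h : (1/2 : ℝ≥0∞) * (⊤ + ∫⁻ x, ENNReal.ofReal ((T x - ψ θ₂) ^ 2) ∂(P θ₂)) = ⊤ := by
        simp
      rw [hA, h]; exact le_top
    by_cases hB : (∫⁻ x, ENNReal.ofReal ((T x - ψ θ₂) ^ 2) ∂(P θ₂)) = ⊤
    · have h : (1/2 : ℝ≥0∞) * ((∫⁻ x, ENNReal.ofReal ((T x - ψ θ₁) ^ 2) ∂(P θ₁)) + ⊤) = ⊤ := by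
        simp
      rw [hB, h]; exact le_top
    have hTa : Integrable (fun x => (T x - ψ θ₁) ^ 2) (P θ₁) := by
      refine ⟨((hT.sub measurable_const).pow_const 2).aestronglyMeasurable, ?_⟩
      rw [hasFiniteIntegral_iff_ofReal (Filter.Eventually.of_forall fun x => sq_nonneg _)]
      exact lt_top_iff_ne_top.2 hA
    have hTb : Integrable (fun x => (T x - ψ θ₂) ^ 2) (P θ₂) := by
      refine ⟨((hT.sub measurable_const).pow_const 2).aestronglyMeasurable, ?_⟩
      rw [hasFiniteIntegral_iff_ofReal (Filter.Eventually.of_forall fun x => sq_nonneg _)]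
      exact lt_top_iff_ne_top.2 hB
    set a : ℝ := ∫ x, (T x - ψ θ₁) ^ 2 ∂(P θ₁) with hadef
    set b : ℝ := ∫ x, (T x - ψ θ₂) ^ 2 ∂(P θ₂) with hbdef
    have ha0 : 0 ≤ a := integral_nonneg fun x => sq_nonneg _
    have hb0 : 0 ≤ b := integral_nonneg fun x => sq_nonneg _
    have haA : ENNReal.ofReal a = ∫⁻ x, ENNReal.ofReal ((T x - ψ θ₁) ^ 2) ∂(P θ₁) :=
      ofReal_integral_eq_lintegral_ofReal hTa
        (Filter.Eventually.of_forall fun x => sq_nonneg _)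
    have hbB : ENNReal.ofReal b = ∫⁻ x, ENNReal.ofReal ((T x - ψ θ₂) ^ 2) ∂(P θ₂) :=
      ofReal_integral_eq_lintegral_ofReal hTb
        (Filter.Eventually.of_forall fun x => sq_nonneg _)
    -- transfer to ν
    have haν : ∫ x, f x * (T x - ψ θ₁) ^ 2 ∂ν = a := by
      rw [hadef]
      simpa [smul_eq_mul] using
        integral_rnDeriv_smul (μ := P θ₁) (ν := ν) hac1 (f := fun x => (T x - ψ θ₁) ^ 2)
    have hbν : ∫ x, g x * (T x - ψ θ₂) ^ 2 ∂ν = b := by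
      rw [hbdef]
      simpa [smul_eq_mul] using
        integral_rnDeriv_smul (μ := P θ₂) (ν := ν) hac2 (f := fun x => (T x - ψ θ₂) ^ 2)
    have haiν : Integrable (fun x => f x * (T x - ψ θ₁) ^ 2) ν := by
      simpa [smul_eq_mul] using
        (integrable_rnDeriv_smul_iff (μ := P θ₁) (ν := ν) hac1).2 hTa
    have hbiν : Integrable (fun x => g x * (T x - ψ θ₂) ^ 2) ν := by
      simpa [smul_eq_mul] using
        (integrable_rnDeriv_smul_iff (μ := P θ₂) (ν := ν) hac2).2 hTb
    set u₁ : 𝒳 → ℝ := fun x => |T x - ψ θ₁| * sf x with hu₁def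
    set u₂ : 𝒳 → ℝ := fun x => |T x - ψ θ₂| * sg x with hu₂def
    have hu₁0 : ∀ x, 0 ≤ u₁ x := fun x => mul_nonneg (abs_nonneg _) (hsf0 x)
    have hu₂0 : ∀ x, 0 ≤ u₂ x := fun x => mul_nonneg (abs_nonneg _) (hsg0 x)
    have hu₁sq : (fun x => u₁ x ^ 2) = fun x => f x * (T x - ψ θ₁) ^ 2 := funext fun x => by
      rw [hu₁def]
      simp only [mul_pow, sq_abs]
      rw [Real.sq_sqrt (hf0 x)]
      ring
    have hu₂sq : (fun x => u₂ x ^ 2) = fun x => g x * (T x - ψ θ₂) ^ 2 := funext fun x => by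
      rw [hu₂def]
      simp only [mul_pow, sq_abs]
      rw [Real.sq_sqrt (hg0 x)]
      ring
    have hu₁2 : MemLp u₁ 2 ν :=
      (memLp_two_iff_integrable_sq (f := u₁)
        (((hT.sub measurable_const).abs.mul hfm.sqrt).aestronglyMeasurable)).2
        (by rw [hu₁sq]; exact haiν)
    have hu₂2 : MemLp u₂ 2 ν :=
      (memLp_two_iff_integrable_sq (f := u₂)
        (((hT.sub measurable_const).abs.mul hgm.sqrt).aestronglyMeasurable)).2
        (by rw [hu₂sq]; exact hbiν)
    have hcs1 : ∫ x, u₁ x * sg x ∂ν ≤ Real.sqrt a := by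
      have h := integral_mul_le_sqrt_mul_sqrt hu₁0 hsg0 hu₁2 hsg2
      rw [show ∫ x, u₁ x ^ 2 ∂ν = a by rw [hu₁sq, haν],
        show ∫ x, sg x ^ 2 ∂ν = 1 by rw [hsgsq, hgint], Real.sqrt_one, mul_one] at h
      exact h
    have hcs2 : ∫ x, u₂ x * sf x ∂ν ≤ Real.sqrt b := by
      have h := integral_mul_le_sqrt_mul_sqrt hu₂0 hsf0 hu₂2 hsf2
      rw [show ∫ x, u₂ x ^ 2 ∂ν = b by rw [hu₂sq, hbν],
        show ∫ x, sf x ^ 2 ∂ν = 1 by rw [hsfsq, hfint], Real.sqrt_one, mul_one] at h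
      exact h
    set Δ : ℝ := ψ θ₁ - ψ θ₂ with hΔdef
    have hpt : ∀ x, |Δ| * (sf x * sg x) ≤ u₁ x * sg x + u₂ x * sf x := by
      intro x
      have habs : |Δ| ≤ |T x - ψ θ₁| + |T x - ψ θ₂| := by
        have h1 : Δ = (T x - ψ θ₂) - (T x - ψ θ₁) := by rw [hΔdef]; ring
        calc |Δ| = |(T x - ψ θ₂) - (T x - ψ θ₁)| := by rw [h1]
          _ ≤ |T x - ψ θ₂| + |T x - ψ θ₁| := abs_sub _ _
          _ = |T x - ψ θ₁| + |T x - ψ θ₂| := add_comm _ _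
      calc |Δ| * (sf x * sg x)
          ≤ (|T x - ψ θ₁| + |T x - ψ θ₂|) * (sf x * sg x) :=
            mul_le_mul_of_nonneg_right habs (mul_nonneg (hsf0 x) (hsg0 x))
        _ = u₁ x * sg x + u₂ x * sf x := by rw [hu₁def, hu₂def]; ring
    have hkey : |Δ| * S ≤ Real.sqrt a + Real.sqrt b := by
      have hmono : ∫ x, |Δ| * (sf x * sg x) ∂ν ≤ ∫ x, (u₁ x * sg x + u₂ x * sf x) ∂ν :=
        integral_mono (hSint.const_mul _)
          ((integrable_mul_of_memL2 hu₁2 hsg2).add (integrable_mul_of_memL2 hu₂2 hsf2)) hpt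
      rw [integral_const_mul, ← hSdef] at hmono
      rw [integral_add (integrable_mul_of_memL2 hu₁2 hsg2)
        (integrable_mul_of_memL2 hu₂2 hsf2)] at hmono
      exact hmono.trans (add_le_add hcs1 hcs2)
    -- the real inequality
    have hreal : max ((1 - H) / 4) 0 * Δ ^ 2 ≤ (a + b) / 2 := by
      rw [max_eq_left (by linarith : (0:ℝ) ≤ (1 - H) / 4)]
      have hsq : (|Δ| * S) ^ 2 ≤ (Real.sqrt a + Real.sqrt b) ^ 2 :=
        pow_le_pow_left₀ (mul_nonneg (abs_nonneg _) hS0) hkey 2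
      have h1 : (Real.sqrt a + Real.sqrt b) ^ 2 ≤ 2 * (a + b) := by
        have e : (Real.sqrt a + Real.sqrt b) ^ 2
            = Real.sqrt a ^ 2 + Real.sqrt b ^ 2 + 2 * Real.sqrt a * Real.sqrt b := by ring
        have htm := two_mul_le_add_sq (Real.sqrt a) (Real.sqrt b)
        have ea := Real.sq_sqrt ha0
        have eb := Real.sq_sqrt hb0
        linarith [e, htm, ea, eb]
      have h2 : (1 - H) * Δ ^ 2 ≤ (|Δ| * S) ^ 2 := by
        have hS1 : 1 - H = 2 * S - 1 := by rw [hH]; ring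
        have h3 : (|Δ| * S) ^ 2 = Δ ^ 2 * S ^ 2 := by rw [mul_pow, sq_abs]
        have h4 : Δ ^ 2 * S ^ 2 - (2 * S - 1) * Δ ^ 2 = Δ ^ 2 * (S - 1) ^ 2 := by ring
        have h5 : 0 ≤ Δ ^ 2 * (S - 1) ^ 2 := mul_nonneg (sq_nonneg _) (sq_nonneg _)
        rw [hS1, h3]
        linarith [h4, h5]
      have h6 : (1 - H) * Δ ^ 2 ≤ 2 * (a + b) := le_trans h2 (le_trans hsq h1)
      calc (1 - H) / 4 * Δ ^ 2 = ((1 - H) * Δ ^ 2) / 4 := by ring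
        _ ≤ (2 * (a + b)) / 4 := (div_le_div_iff_of_pos_right (by norm_num : (0:ℝ) < 4)).2 h6
        _ = (a + b) / 2 := by ring
    calc ENNReal.ofReal (max ((1 - H) / 4) 0 * Δ ^ 2)
        ≤ ENNReal.ofReal ((a + b) / 2) := ENNReal.ofReal_le_ofReal hreal
      _ = (1/2 : ℝ≥0∞) * (ENNReal.ofReal a + ENNReal.ofReal b) := by
          rw [show (a + b) / 2 = (1/2) * (a + b) by ring,
            ENNReal.ofReal_mul (by norm_num : (0:ℝ) ≤ 1/2), ENNReal.ofReal_add ha0 hb0]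
          congr 1
          rw [ENNReal.ofReal_div_of_pos (by norm_num), ENNReal.ofReal_one,
            ENNReal.ofReal_ofNat]
      _ = _ := by rw [haA, hbB]
  refine ⟨main, ?_⟩
  rw [ge_iff_le]
  refine iSup_le fun θ₁ => iSup_le fun θ₂ => le_iInf fun T => le_iInf fun hT => ?_
  set R : Θ → ℝ≥0∞ := fun θ => ∫⁻ x, ENNReal.ofReal ((T x - ψ θ) ^ 2) ∂(P θ) with hR
  calc ENNReal.ofReal (max ((1 - hellingerSq (P θ₁) (P θ₂)) / 4) 0 * (ψ θ₁ - ψ θ₂) ^ 2)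
      ≤ (1/2 : ℝ≥0∞) * (R θ₁ + R θ₂) := main T hT θ₁ θ₂
    _ ≤ (1/2 : ℝ≥0∞) * ((⨆ θ, R θ) + (⨆ θ, R θ)) :=
        mul_le_mul_right (add_le_add (le_iSup _ θ₁) (le_iSup _ θ₂)) _
    _ = ⨆ θ, R θ := by
        rw [← two_mul, ← mul_assoc, one_div,
          ENNReal.inv_mul_cancel two_ne_zero ENNReal.ofNat_ne_top, one_mul]
end

section
/- Local asymptotic minimax lower bound for the uniform scale model via the two-point Hellinger bound (Proposition I.2 of the paper's supplement). Let θ₀ > 0 and for θ > 0 let P_θ := Unif(0,θ) be the uniform probability measure on (0,θ). Define C* := sup_{η ≥ 0} 4η² · max( (1/2)·exp(−η) − 1/4, 0 ) (numerically C* ≈ 0.0558). Then C* > 0 and liminf_{c→∞} liminf_{n→∞} inf_T sup_{θ > 0, |θ − θ₀| < c n^{-1}} n² · E_{P_θⁿ} |T(X) − θ|² ≥ C* · θ₀², where the infimum is over measurable T : ℝⁿ → ℝ and P_θⁿ denotes the n-fold product of P_θ. -/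
open MeasureTheory ProbabilityTheory ENNReal Filter

/-- `Unif(0,θ)`: the uniform probability measure on the interval `(0,θ)`. -/
noncomputable def unif (θ : ℝ) : Measure ℝ :=
  ENNReal.ofReal θ⁻¹ • (volume.restrict (Set.Ioo 0 θ))

instance unif_finite (θ : ℝ) : IsFiniteMeasure (unif θ) := by
  constructor
  rw [unif, Measure.smul_apply, Measure.restrict_apply MeasurableSet.univ,
    Set.univ_inter, Real.volume_Ioo, smul_eq_mul, sub_zero]
  exact ENNReal.mul_lt_top ENNReal.ofReal_lt_top ENNReal.ofReal_lt_top

lemma unif_prob {θ : ℝ} (hθ : 0 < θ) : IsProbabilityMeasure (unif θ) := by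
  constructor
  rw [unif, Measure.smul_apply, Measure.restrict_apply MeasurableSet.univ,
    Set.univ_inter, Real.volume_Ioo, smul_eq_mul, sub_zero,
    ← ENNReal.ofReal_mul (by positivity), inv_mul_cancel₀ hθ.ne', ENNReal.ofReal_one]

lemma pi_unif_eq (θ : ℝ) (n : ℕ) :
    (Measure.pi fun _ : Fin n => unif θ) =
      (ENNReal.ofReal θ⁻¹) ^ n •
        ((Measure.pi fun _ : Fin n => (volume : Measure ℝ)).restrict
          (Set.univ.pi fun _ => Set.Ioo 0 θ)) := by
  refine Measure.pi_eq (μ := fun _ : Fin n => unif θ) fun s hs => ?_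
  rw [Measure.smul_apply, Measure.restrict_apply (MeasurableSet.univ_pi hs), smul_eq_mul]
  have h1 : (Set.univ.pi s) ∩ (Set.univ.pi fun _ : Fin n => Set.Ioo (0:ℝ) θ)
      = Set.univ.pi (fun i => s i ∩ Set.Ioo 0 θ) := by
    rw [← Set.pi_inter_distrib]
  rw [h1, Measure.pi_pi]
  simp only [unif, Measure.smul_apply, Measure.restrict_apply (hs _), smul_eq_mul]
  rw [Finset.prod_mul_distrib, Finset.prod_const, Finset.card_univ, Fintype.card_fin]

lemma lintegral_unif_pi_le {θ₀ θ₂ : ℝ} (h0 : 0 < θ₀) (h12 : θ₀ ≤ θ₂) (n : ℕ)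
    (f : (Fin n → ℝ) → ℝ≥0∞) :
    ∫⁻ x, f x ∂(Measure.pi fun _ : Fin n => unif θ₀) ≤
      ENNReal.ofReal ((θ₂ / θ₀) ^ n) * ∫⁻ x, f x ∂(Measure.pi fun _ : Fin n => unif θ₂) := by
  have h2 : 0 < θ₂ := lt_of_lt_of_le h0 h12
  rw [pi_unif_eq θ₀ n, pi_unif_eq θ₂ n, lintegral_smul_measure, lintegral_smul_measure]
  have hmono : ∫⁻ x, f x ∂((Measure.pi fun _ : Fin n => (volume : Measure ℝ)).restrict
        (Set.univ.pi fun _ => Set.Ioo 0 θ₀)) ≤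
      ∫⁻ x, f x ∂((Measure.pi fun _ : Fin n => (volume : Measure ℝ)).restrict
        (Set.univ.pi fun _ => Set.Ioo 0 θ₂)) := by
    refine lintegral_mono' (Measure.restrict_mono ?_ le_rfl) le_rfl
    exact Set.pi_mono fun i _ => Set.Ioo_subset_Ioo le_rfl h12
  have hc : (ENNReal.ofReal θ₀⁻¹) ^ n
      = ENNReal.ofReal ((θ₂ / θ₀) ^ n) * (ENNReal.ofReal θ₂⁻¹) ^ n := by
    rw [ENNReal.ofReal_pow (by positivity), ← mul_pow, ← ENNReal.ofReal_mul (by positivity)]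
    congr 2
    field_simp
  rw [hc, smul_eq_mul, smul_eq_mul, mul_assoc]
  gcongr

lemma exp_half_lt_two : Real.exp (1/2) < 2 := by
  have h : Real.exp (1/2) * Real.exp (1/2) = Real.exp 1 := by
    rw [← Real.exp_add]; norm_num
  nlinarith [Real.exp_pos (1/2:ℝ), Real.exp_one_lt_d9]

lemma exp_two_le_eight : Real.exp 2 ≤ 8 := by
  have h : Real.exp 1 * Real.exp 1 = Real.exp 2 := by
    rw [← Real.exp_add]; norm_num
  nlinarith [Real.exp_pos (1:ℝ), Real.exp_one_lt_d9]

lemma val_le (η : ℝ) (hη : 0 ≤ η) :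
    4 * η ^ 2 * max ((1/2) * Real.exp (-η) - 1/4) 0 ≤ 1/8 := by
  rcases le_or_gt ((1/2) * Real.exp (-η) - 1/4) 0 with h | h
  · rw [max_eq_right h, mul_zero]; norm_num
  · rw [max_eq_left h.le]
    set t := Real.exp (-η) with ht_def
    have ht : 0 < t := Real.exp_pos _
    have key : t * (1 + η) ≤ 1 := by
      have h1 := Real.add_one_le_exp η
      have h2 := Real.exp_pos η
      have h3 : t * Real.exp η = 1 := by
        rw [ht_def, ← Real.exp_add]; norm_num
      nlinarith
    nlinarith [sq_nonneg η, mul_nonneg hη (sq_nonneg (η - 3/5)),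
      sq_nonneg (η - 47/80), mul_nonneg (mul_nonneg hη hη) ht.le,
      mul_nonneg (sq_nonneg η) ht.le]

lemma two_point (θ₀ : ℝ) (hθ₀ : 0 < θ₀) (n : ℕ) (hn : 1 ≤ n)
    (T : (Fin n → ℝ) → ℝ) (hT : Measurable T) :
    ENNReal.ofReal (θ₀ ^ 2 / 8) ≤
      max (((n : ℝ≥0∞) ^ 2) * ∫⁻ x, ENNReal.ofReal ((T x - θ₀) ^ 2)
            ∂(Measure.pi fun _ : Fin n => unif θ₀))
          (((n : ℝ≥0∞) ^ 2) * ∫⁻ x, ENNReal.ofReal ((T x - (θ₀ * (1 + 2 / n))) ^ 2)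
            ∂(Measure.pi fun _ : Fin n => unif (θ₀ * (1 + 2 / n)))) := by
  have hnR : (1:ℝ) ≤ (n:ℝ) := by exact_mod_cast hn
  have hnpos : (0:ℝ) < n := by linarith
  set θ₂ : ℝ := θ₀ * (1 + 2 / n) with hθ₂def
  have h12 : θ₀ ≤ θ₂ := by
    rw [hθ₂def]; nlinarith [div_pos (by norm_num : (0:ℝ) < 2) hnpos]
  have hδ : θ₂ - θ₀ = 2 * θ₀ / n := by
    rw [hθ₂def]; field_simp; ring
  set μ₁ := Measure.pi fun _ : Fin n => unif θ₀ with hμ₁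
  set μ₂ := Measure.pi fun _ : Fin n => unif θ₂ with hμ₂
  haveI : IsProbabilityMeasure (unif θ₀) := unif_prob hθ₀
  haveI : IsProbabilityMeasure μ₁ := by rw [hμ₁]; infer_instance
  set A := ∫⁻ x, ENNReal.ofReal ((T x - θ₀) ^ 2) ∂μ₁ with hA
  set B := ∫⁻ x, ENNReal.ofReal ((T x - θ₂) ^ 2) ∂μ₂ with hB
  set A₂ := ∫⁻ x, ENNReal.ofReal ((T x - θ₂) ^ 2) ∂μ₁ with hA₂
  set r : ℝ := (θ₂ / θ₀) ^ n with hr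
  have hr1 : 1 ≤ r := one_le_pow₀ ((one_le_div hθ₀).mpr h12)
  have hr8 : r ≤ 8 := by
    have h1 : θ₂ / θ₀ = 1 + 2 / n := by rw [hθ₂def]; field_simp
    have h2 : (1 : ℝ) + 2 / n ≤ Real.exp (2 / n) := by
      have := Real.add_one_le_exp (2 / (n:ℝ)); linarith
    have h3 : r ≤ Real.exp (2 / n) ^ n := by
      rw [hr, h1]; exact pow_le_pow_left₀ (by positivity) h2 n
    have h4 : Real.exp (2 / n) ^ n = Real.exp 2 := by
      rw [← Real.exp_nat_mul]
      congr 1; field_simp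
    calc r ≤ Real.exp 2 := h3.trans_eq h4
    _ ≤ 8 := exp_two_le_eight
  have hstep1 : A₂ ≤ ENNReal.ofReal r * B :=
    lintegral_unif_pi_le hθ₀ h12 n _
  have hmeas : Measurable fun x => ENNReal.ofReal ((T x - θ₀) ^ 2) :=
    ((hT.sub measurable_const).pow_const 2).ennreal_ofReal
  have hstep2 : ENNReal.ofReal ((θ₂ - θ₀) ^ 2 / 2) ≤ A + A₂ := by
    have hpt : ∀ x, ENNReal.ofReal ((θ₂ - θ₀) ^ 2 / 2) ≤
        ENNReal.ofReal ((T x - θ₀) ^ 2) + ENNReal.ofReal ((T x - θ₂) ^ 2) := by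
      intro x
      rw [← ENNReal.ofReal_add (sq_nonneg _) (sq_nonneg _)]
      apply ENNReal.ofReal_le_ofReal
      nlinarith [sq_nonneg (2 * T x - θ₀ - θ₂)]
    calc ENNReal.ofReal ((θ₂ - θ₀) ^ 2 / 2)
        = ∫⁻ _, ENNReal.ofReal ((θ₂ - θ₀) ^ 2 / 2) ∂μ₁ := by
          rw [lintegral_const, measure_univ, mul_one]
      _ ≤ ∫⁻ x, (ENNReal.ofReal ((T x - θ₀) ^ 2) + ENNReal.ofReal ((T x - θ₂) ^ 2)) ∂μ₁ :=
          lintegral_mono hpt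
      _ = A + A₂ := lintegral_add_left hmeas _
  set M := max (((n : ℝ≥0∞) ^ 2) * A) (((n : ℝ≥0∞) ^ 2) * B) with hM
  have hnE : ((n : ℝ≥0∞) ^ 2) = ENNReal.ofReal ((n:ℝ) ^ 2) := by
    rw [ENNReal.ofReal_pow (by positivity)]
    congr 1
    exact (ENNReal.ofReal_natCast n).symm
  have hchain : ENNReal.ofReal (2 * θ₀ ^ 2) ≤ (2 * ENNReal.ofReal r) * M := by
    have e1 : ENNReal.ofReal (2 * θ₀ ^ 2)
        = ((n : ℝ≥0∞) ^ 2) * ENNReal.ofReal ((θ₂ - θ₀) ^ 2 / 2) := by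
      rw [hnE, ← ENNReal.ofReal_mul (by positivity)]
      congr 1
      rw [hδ]
      field_simp
    rw [e1]
    calc ((n : ℝ≥0∞) ^ 2) * ENNReal.ofReal ((θ₂ - θ₀) ^ 2 / 2)
        ≤ ((n : ℝ≥0∞) ^ 2) * (A + A₂) := by gcongr
      _ ≤ ((n : ℝ≥0∞) ^ 2) * (A + ENNReal.ofReal r * B) := by gcongr
      _ = ((n : ℝ≥0∞) ^ 2) * A + ENNReal.ofReal r * (((n : ℝ≥0∞) ^ 2) * B) := by ring
      _ ≤ 1 * M + ENNReal.ofReal r * M :=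
          add_le_add (by rw [one_mul]; exact le_max_left _ _)
            (mul_le_mul_right (le_max_right _ _) _)
      _ ≤ ENNReal.ofReal r * M + ENNReal.ofReal r * M := by
          gcongr
          exact le_trans (by norm_num) (ENNReal.ofReal_le_ofReal hr1)
      _ = (2 * ENNReal.ofReal r) * M := by ring
  have hc0 : (2 * ENNReal.ofReal r) ≠ 0 :=
    mul_ne_zero (by norm_num)
      (by simp only [ne_eq, ENNReal.ofReal_eq_zero, not_le]; linarith)
  have hcT : (2 * ENNReal.ofReal r) ≠ ⊤ :=
    ENNReal.mul_ne_top (by norm_num) ENNReal.ofReal_ne_top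
  rw [← ENNReal.mul_le_mul_iff_left hc0 hcT]
  calc ENNReal.ofReal (θ₀ ^ 2 / 8) * (2 * ENNReal.ofReal r)
      = ENNReal.ofReal (θ₀ ^ 2 / 8 * (2 * r)) := by
        rw [ENNReal.ofReal_mul (by positivity), ENNReal.ofReal_mul (by norm_num)]
        norm_num
    _ ≤ ENNReal.ofReal (2 * θ₀ ^ 2) := by
        apply ENNReal.ofReal_le_ofReal
        nlinarith [sq_nonneg θ₀]
    _ ≤ (2 * ENNReal.ofReal r) * M := hchain
    _ = M * (2 * ENNReal.ofReal r) := mul_comm _ _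

/-- **Local asymptotic minimax lower bound for the uniform scale model via the
two-point Hellinger bound (Proposition I.2).** The constant is
`C* = sup_{η ≥ 0} 4η² · max((1/2)·exp(−η) − 1/4, 0) ≈ 0.0558`. -/
theorem uniform_scale_LAM_lower_bound (θ₀ : ℝ) (hθ₀ : 0 < θ₀) :
    0 < sSup ((fun η : ℝ => 4 * η ^ 2 * max ((1/2) * Real.exp (-η) - 1/4) 0) '' Set.Ici 0)
    ∧ Filter.liminf (fun c : ℝ =>
        Filter.liminf (fun n : ℕ =>
          ⨅ (T : (Fin n → ℝ) → ℝ) (_ : Measurable T),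
            ⨆ θ ∈ {θ : ℝ | 0 < θ ∧ |θ - θ₀| < c * (n : ℝ)⁻¹},
              ((n : ℝ≥0∞) ^ 2) *
                ∫⁻ x, ENNReal.ofReal ((T x - θ) ^ 2)
                  ∂(Measure.pi fun _ : Fin n => unif θ)) Filter.atTop) Filter.atTop
      ≥ ENNReal.ofReal
          (sSup ((fun η : ℝ => 4 * η ^ 2 * max ((1/2) * Real.exp (-η) - 1/4) 0) '' Set.Ici 0)
            * θ₀ ^ 2) := by
  set f : ℝ → ℝ := fun η => 4 * η ^ 2 * max ((1/2) * Real.exp (-η) - 1/4) 0 with hf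
  have hbdd : BddAbove (f '' Set.Ici 0) := by
    refine ⟨1/8, ?_⟩
    rintro x ⟨η, hη, rfl⟩
    exact val_le η hη
  have hmem : f (1/2) ∈ f '' Set.Ici 0 := ⟨1/2, by norm_num, rfl⟩
  have hposhalf : (0:ℝ) < (1/2) * Real.exp (-(1/2)) - 1/4 := by
    have h3 : Real.exp (-(1/2:ℝ)) * Real.exp (1/2) = 1 := by
      rw [← Real.exp_add]; norm_num
    nlinarith [Real.exp_pos (1/2:ℝ), exp_half_lt_two, Real.exp_pos (-(1/2):ℝ)]
  have hfpos : 0 < f (1/2) := by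
    have hfeq : f (1/2) = 4 * (1/2:ℝ) ^ 2 * max ((1/2) * Real.exp (-(1/2:ℝ)) - 1/4) 0 := rfl
    rw [hfeq, max_eq_left hposhalf.le]
    nlinarith
  have hCpos : 0 < sSup (f '' Set.Ici 0) := lt_csSup_of_lt hbdd hmem hfpos
  have hCle : sSup (f '' Set.Ici 0) ≤ 1/8 := by
    refine csSup_le ⟨_, hmem⟩ ?_
    rintro x ⟨η, hη, rfl⟩
    exact val_le η hη
  refine ⟨hCpos, ?_⟩
  have hK : ENNReal.ofReal (sSup (f '' Set.Ici 0) * θ₀ ^ 2) ≤ ENNReal.ofReal (θ₀ ^ 2 / 8) := by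
    apply ENNReal.ofReal_le_ofReal
    nlinarith [sq_nonneg θ₀]
  refine le_trans hK ?_
  apply Filter.le_liminf_of_le (by isBoundedDefault)
  filter_upwards [Filter.eventually_ge_atTop (2 * θ₀ + 1)] with c hc
  apply Filter.le_liminf_of_le (by isBoundedDefault)
  filter_upwards [Filter.eventually_ge_atTop 1] with n hn
  refine le_iInf fun T => le_iInf fun hT => ?_
  have hnR : (1:ℝ) ≤ (n:ℝ) := by exact_mod_cast hn
  have hnpos : (0:ℝ) < n := by linarith
  have hinv : (0:ℝ) < (n:ℝ)⁻¹ := by positivity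
  have hkey := two_point θ₀ hθ₀ n hn T hT
  have hmem1 : θ₀ ∈ {θ : ℝ | 0 < θ ∧ |θ - θ₀| < c * (n : ℝ)⁻¹} := by
    refine ⟨hθ₀, ?_⟩
    rw [sub_self, abs_zero]
    exact mul_pos (by linarith) hinv
  have hmem2 : θ₀ * (1 + 2 / n) ∈ {θ : ℝ | 0 < θ ∧ |θ - θ₀| < c * (n : ℝ)⁻¹} := by
    have hθ₂pos : 0 < θ₀ * (1 + 2 / n) := by positivity
    refine ⟨hθ₂pos, ?_⟩
    have h1 : θ₀ * (1 + 2 / n) - θ₀ = 2 * θ₀ * (n:ℝ)⁻¹ := by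
      field_simp
      ring
    rw [h1, abs_of_nonneg (by positivity)]
    have h2c : (2 * θ₀ : ℝ) < c := by linarith
    exact mul_lt_mul_of_pos_right h2c hinv
  refine le_trans hkey (max_le ?_ ?_)
  · exact le_biSup (fun θ => ((n : ℝ≥0∞) ^ 2) *
      ∫⁻ x, ENNReal.ofReal ((T x - θ) ^ 2) ∂(Measure.pi fun _ : Fin n => unif θ)) hmem1
  · exact le_biSup (fun θ => ((n : ℝ≥0∞) ^ 2) *
      ∫⁻ x, ENNReal.ofReal ((T x - θ) ^ 2) ∂(Measure.pi fun _ : Fin n => unif θ)) hmem2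
end

section
/- Exact local minimax risk of the plug-in maximum likelihood estimator for max(θ,0) in the Gaussian location model (first part of Proposition 6.1 of the paper). Let n ≥ 1 be an integer and δ > 0. For θ ∈ ℝ let P_θⁿ be the n-fold product of the Gaussian measure N(θ,1), let X̄ₙ := (1/n)∑_{i=1}^n X_i denote the sample mean of the observation X = (X₁,…,Xₙ), and let S := max(X̄ₙ, 0). Then sup_{|θ|<δ} n · E_{P_θⁿ} |S − max(θ,0)|² = sup_{0 ≤ θ < δ} { E[ Z² · 1{Z ≥ −√n·θ} ] + n θ² · P( Z < −√n·θ ) }, where Z is a standard normal random variable. -/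
open MeasureTheory ProbabilityTheory ENNReal

section Aux
open Real NNReal

lemma exp_aux (c1 c2 A B C D : ℝ) (h : A + B = C + D) :
    (c1 * rexp A) * (c2 * rexp B) = (c1 * c2 * rexp C) * rexp D := by
  rw [mul_mul_mul_comm, ← Real.exp_add, h, Real.exp_add, ← mul_assoc]

section Conv
variable {μ1 μ2 : ℝ} {v1 v2 : ℝ≥0}

lemma pdf_conv_fun_eq (h1 : v1 ≠ 0) (h2 : v2 ≠ 0) (z y : ℝ) :
    gaussianPDFReal μ1 v1 (z - y) * gaussianPDFReal μ2 v2 y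
      = ((√(2 * π * v1))⁻¹ * (√(2 * π * v2))⁻¹
          * rexp (-(z - μ1 - μ2) ^ 2 / (2 * ((v1:ℝ) + v2))))
        * rexp (-(((v1:ℝ) + v2) / (2 * v1 * v2))
            * (y - ((v2:ℝ) * (z - μ1) + (v1:ℝ) * μ2) / ((v1:ℝ) + v2)) ^ 2) := by
  have hv1 : (0:ℝ) < v1 := by positivity
  have hv2 : (0:ℝ) < v2 := by positivity
  have hs : (0:ℝ) < (v1:ℝ) + v2 := by linarith
  unfold gaussianPDFReal
  exact exp_aux _ _ _ _ _ _ (by field_simp; ring)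

lemma pdf_conv_integrable (h1 : v1 ≠ 0) (h2 : v2 ≠ 0) (z : ℝ) :
    Integrable (fun y => gaussianPDFReal μ1 v1 (z - y) * gaussianPDFReal μ2 v2 y) := by
  have hv1 : (0:ℝ) < v1 := by positivity
  have hv2 : (0:ℝ) < v2 := by positivity
  have ha : (0:ℝ) < ((v1:ℝ) + v2) / (2 * v1 * v2) := by positivity
  simp_rw [pdf_conv_fun_eq h1 h2 z]
  exact (((integrable_exp_neg_mul_sq ha).comp_sub_right _).const_mul _)

lemma pdf_conv_real (h1 : v1 ≠ 0) (h2 : v2 ≠ 0) (z : ℝ) :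
    ∫ y, gaussianPDFReal μ1 v1 (z - y) * gaussianPDFReal μ2 v2 y
      = gaussianPDFReal (μ1 + μ2) (v1 + v2) z := by
  have hv1 : (0:ℝ) < v1 := by positivity
  have hv2 : (0:ℝ) < v2 := by positivity
  have hs : (0:ℝ) < (v1:ℝ) + v2 := by linarith
  have ha : (0:ℝ) < ((v1:ℝ) + v2) / (2 * v1 * v2) := by positivity
  simp_rw [pdf_conv_fun_eq h1 h2 z]
  rw [integral_const_mul]
  rw [integral_sub_right_eq_self (fun y : ℝ => rexp (-(((v1:ℝ) + v2) / (2 * v1 * v2)) * y ^ 2))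
      (((v2:ℝ) * (z - μ1) + (v1:ℝ) * μ2) / ((v1:ℝ) + v2)), integral_gaussian]
  have hc : (√(2*π*(v1:ℝ)))⁻¹ * (√(2*π*(v2:ℝ)))⁻¹
      * √(π / (((v1:ℝ)+v2)/(2*(v1:ℝ)*v2))) = (√(2*π*((v1:ℝ)+(v2:ℝ))))⁻¹ := by
    rw [← Real.sqrt_inv, ← Real.sqrt_inv, ← Real.sqrt_mul (by positivity),
      ← Real.sqrt_mul (by positivity), ← Real.sqrt_inv]
    congr 1
    field_simp
  unfold gaussianPDFReal
  push_cast
  rw [mul_right_comm, hc]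
  congr 2
  ring

lemma pdf_conv_lintegral (h1 : v1 ≠ 0) (h2 : v2 ≠ 0) (z : ℝ) :
    ∫⁻ y, gaussianPDF μ1 v1 (z - y) * gaussianPDF μ2 v2 y
      = gaussianPDF (μ1 + μ2) (v1 + v2) z := by
  simp_rw [gaussianPDF,
    ← ENNReal.ofReal_mul (gaussianPDFReal_nonneg μ1 v1 _)]
  rw [← ofReal_integral_eq_lintegral_ofReal (pdf_conv_integrable h1 h2 z)
      (ae_of_all _ fun y => mul_nonneg (gaussianPDFReal_nonneg _ _ _)
        (gaussianPDFReal_nonneg _ _ _)),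
    pdf_conv_real h1 h2 z]

lemma indicator_one_apply {s : Set ℝ} (F : ℝ → ℝ≥0∞) (z : ℝ) :
    s.indicator F z = F z * s.indicator (1 : ℝ → ℝ≥0∞) z := by
  by_cases hz : z ∈ s <;> simp [hz]

lemma gaussian_conv (h1 : v1 ≠ 0) (h2 : v2 ≠ 0) :
    Measure.map (fun p : ℝ × ℝ => p.1 + p.2)
        ((gaussianReal μ1 v1).prod (gaussianReal μ2 v2))
      = gaussianReal (μ1 + μ2) (v1 + v2) := by
  have hsum : v1 + v2 ≠ 0 := by
    simp only [ne_eq, add_eq_zero, not_and_or]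
    exact Or.inl h1
  set f1 := gaussianPDF μ1 v1 with hf1
  set f2 := gaussianPDF μ2 v2 with hf2
  have hm1 : Measurable f1 := measurable_gaussianPDF _ _
  have hm2 : Measurable f2 := measurable_gaussianPDF _ _
  ext s hs
  set ι : ℝ → ℝ≥0∞ := s.indicator 1 with hι
  have hmι : Measurable ι := measurable_one.indicator hs
  rw [Measure.map_apply measurable_add hs,
    ← lintegral_indicator_one (measurable_add hs)]
  have hpre : ∀ p : ℝ × ℝ, ((fun p : ℝ × ℝ => p.1 + p.2) ⁻¹' s).indicator 1 p
      = ι (p.1 + p.2) := by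
    intro p
    by_cases hp : p.1 + p.2 ∈ s <;> simp [hι, Set.indicator_apply, hp, Set.mem_preimage]
  simp_rw [hpre]
  rw [lintegral_prod (fun p : ℝ × ℝ => ι (p.1 + p.2))
    (Measurable.aemeasurable (by exact hmι.comp measurable_add))]
  rw [gaussianReal_of_var_ne_zero μ1 h1, gaussianReal_of_var_ne_zero μ2 h2,
    gaussianReal_of_var_ne_zero _ hsum]
  rw [← hf1, ← hf2]
  rw [lintegral_withDensity_eq_lintegral_mul _ hm1
    (Measurable.lintegral_prod_right (f := fun x y => ι (x + y))
      (hmι.comp measurable_add))]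
  have hinner : ∀ x : ℝ, (f1 * fun x => ∫⁻ y, ι (x + y) ∂(volume.withDensity f2)) x
      = ∫⁻ z, ι z * (f1 x * f2 (z - x)) ∂volume := by
    intro x
    simp only [Pi.mul_apply]
    rw [lintegral_withDensity_eq_lintegral_mul _ hm2 (show Measurable fun y : ℝ => ι (x + y) from hmι.comp (measurable_const.add measurable_id))]
    have : ∀ y : ℝ, (f2 * fun y => ι (x + y)) y
        = (fun z => f2 (z - x) * ι z) (y + x) := by
      intro y
      simp only [Pi.mul_apply, add_sub_cancel_right, add_comm x y]
    simp_rw [this]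
    rw [lintegral_add_right_eq_self (fun z => f2 (z - x) * ι z) x,
      ← lintegral_const_mul _ (show Measurable fun z : ℝ => f2 (z - x) * ι z from (hm2.comp (measurable_id.sub measurable_const)).mul hmι)]
    exact lintegral_congr fun z => by ring
  simp_rw [hinner]
  rw [lintegral_lintegral_swap]
  swap
  · exact ((hmι.comp measurable_snd).mul
      ((hm1.comp measurable_fst).mul
        (hm2.comp (measurable_snd.sub measurable_fst)))).aemeasurable
  rw [withDensity_apply _ hs, ← lintegral_indicator hs]
  refine lintegral_congr fun z => ?_
  rw [lintegral_const_mul _ (show Measurable fun x : ℝ => f1 x * f2 (z - x) from hm1.mul (hm2.comp (measurable_const.sub measurable_id))),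
    indicator_one_apply, mul_comm _ (ι z)]
  congr 1
  have : ∀ x : ℝ, f1 x * f2 (z - x) = gaussianPDF μ2 v2 (z - x) * gaussianPDF μ1 v1 x :=
    fun x => mul_comm _ _
  simp_rw [this]
  rw [pdf_conv_lintegral h2 h1 z, add_comm μ2 μ1, add_comm v2 v1]

end Conv

lemma gaussian_sum_law (θ : ℝ) : ∀ n : ℕ, 1 ≤ n →
    Measure.map (fun x : Fin n → ℝ => ∑ i, x i)
        (Measure.pi fun _ : Fin n => gaussianReal θ 1)
      = gaussianReal (n * θ) n := by
  refine Nat.le_induction ?_ ?_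
  · have h : (fun x : Fin 1 → ℝ => ∑ i, x i)
        = MeasurableEquiv.funUnique (Fin 1) ℝ := by
      funext x
      simp [Fin.sum_univ_one, MeasurableEquiv.funUnique]
    rw [h]; erw [(measurePreserving_funUnique (gaussianReal θ 1) (Fin 1)).map_eq]
    norm_num
  · intro n hn ih
    have hSmeas : Measurable fun y : Fin n → ℝ => ∑ j, y j :=
      Finset.measurable_sum Finset.univ fun i _ => measurable_pi_apply i
    have he := measurePreserving_piFinSuccAbove
      (fun _ : Fin (n + 1) => gaussianReal θ 1) 0
    have hsum_eq : (fun x : Fin (n + 1) → ℝ => ∑ i, x i)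
        = (fun p : ℝ × (Fin n → ℝ) => p.1 + ∑ j, p.2 j)
          ∘ (MeasurableEquiv.piFinSuccAbove (fun _ : Fin (n + 1) => ℝ) 0) := by
      funext x
      simp [MeasurableEquiv.piFinSuccAbove, Fin.sum_univ_succAbove x 0, Fin.tail]
    rw [hsum_eq, ← Measure.map_map (by exact (measurable_fst.add (hSmeas.comp measurable_snd)))
        (MeasurableEquiv.piFinSuccAbove (fun _ : Fin (n + 1) => ℝ) 0).measurable,
      he.map_eq]
    rw [show (fun p : ℝ × (Fin n → ℝ) => p.1 + ∑ j, p.2 j)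
        = (fun q : ℝ × ℝ => q.1 + q.2) ∘ (Prod.map id fun y : Fin n → ℝ => ∑ j, y j)
        from rfl]
    rw [← Measure.map_map measurable_add (measurable_id.prodMap hSmeas),
      ← Measure.map_prod_map _ _ measurable_id hSmeas, Measure.map_id, ih,
      gaussian_conv one_ne_zero (by simp; omega)]
    congr 1
    · push_cast; ring
    · push_cast; ring

section Main

lemma max_div_pos (a c : ℝ) (hc : 0 < c) : max (a / c) 0 = max a 0 / c := by
  calc max (a / c) 0 = max (a / c) (0 / c) := by rw [zero_div]
    _ = max a 0 / c := max_div_div_right hc.le a 0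

lemma J_meas (t : ℝ) :
    Measurable fun z : ℝ => ENNReal.ofReal ((max (z + t) 0 - max t 0) ^ 2) :=
  ((((measurable_id.add_const t).max measurable_const).sub measurable_const).pow_const
    2).ennreal_ofReal

lemma J_eq {t : ℝ} (ht : 0 ≤ t) :
    ∫⁻ z, ENNReal.ofReal ((max (z + t) 0 - max t 0) ^ 2) ∂(gaussianReal 0 1)
      = (∫⁻ z in Set.Ici (-t), ENNReal.ofReal (z ^ 2) ∂(gaussianReal 0 1))
        + ENNReal.ofReal (t ^ 2) * (gaussianReal 0 1) {z : ℝ | z < -t} := by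
  rw [← lintegral_add_compl _ (measurableSet_Ici (a := -t))]
  congr 1
  · refine setLIntegral_congr_fun measurableSet_Ici (fun z hz => ?_)
    have h1 : (0:ℝ) ≤ z + t := by
      have : -t ≤ z := hz
      linarith
    rw [max_eq_left h1, max_eq_left ht]
    ring_nf
  · rw [Set.compl_Ici]
    rw [show {z : ℝ | z < -t} = Set.Iio (-t) from rfl]
    rw [setLIntegral_congr_fun measurableSet_Iio (fun z hz => ?_),
      setLIntegral_const, mul_comm]
    have h1 : z + t ≤ 0 := by
      have : z < -t := hz
      linarith
    rw [max_eq_right h1, max_eq_left ht]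
    ring_nf

lemma J_mono {t : ℝ} (ht : t ≤ 0) :
    ∫⁻ z, ENNReal.ofReal ((max (z + t) 0 - max t 0) ^ 2) ∂(gaussianReal 0 1)
      ≤ ∫⁻ z, ENNReal.ofReal ((max (z + 0) 0 - max 0 0) ^ 2) ∂(gaussianReal 0 1) := by
  refine lintegral_mono fun z => ENNReal.ofReal_le_ofReal ?_
  rw [max_eq_right ht, add_zero, max_self, sub_zero, sub_zero]
  have h1 : 0 ≤ max (z + t) 0 := le_max_right _ _
  have h2 : max (z + t) 0 ≤ max z 0 := max_le_max (by linarith) le_rfl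
  exact pow_le_pow_left₀ h1 h2 2

lemma key_eq (n : ℕ) (hn : 1 ≤ n) (θ : ℝ) :
    (n : ℝ≥0∞) *
        ∫⁻ x, ENNReal.ofReal
            ((max ((∑ i, x i) / (n : ℝ)) 0 - max θ 0) ^ 2)
          ∂(Measure.pi fun _ : Fin n => gaussianReal θ 1)
      = ∫⁻ z, ENNReal.ofReal
          ((max (z + Real.sqrt n * θ) 0 - max (Real.sqrt n * θ) 0) ^ 2)
          ∂(gaussianReal 0 1) := by
  set s : ℝ := Real.sqrt n with hs_def
  have hn0 : (0:ℝ) < n := by positivity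
  have hs : 0 < s := Real.sqrt_pos.mpr hn0
  have hs2 : s ^ 2 = n := Real.sq_sqrt (by positivity)
  set f : ℝ → ℝ≥0∞ := fun u => ENNReal.ofReal ((max (u / (n:ℝ)) 0 - max θ 0) ^ 2) with hf_def
  have hf : Measurable f :=
    ((((measurable_id.div_const _).max measurable_const).sub measurable_const).pow_const
      2).ennreal_ofReal
  have hSmeas : Measurable fun x : Fin n → ℝ => ∑ i, x i :=
    Finset.measurable_sum Finset.univ fun i _ => measurable_pi_apply i
  have h1 : (∫⁻ x, ENNReal.ofReal ((max ((∑ i, x i) / (n : ℝ)) 0 - max θ 0) ^ 2)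
        ∂(Measure.pi fun _ : Fin n => gaussianReal θ 1))
      = ∫⁻ u, f u ∂(Measure.map (fun x : Fin n → ℝ => ∑ i, x i)
          (Measure.pi fun _ : Fin n => gaussianReal θ 1)) :=
    (lintegral_map hf hSmeas).symm
  rw [h1, gaussian_sum_law θ n hn]
  have hmap : gaussianReal ((n:ℝ) * θ) (n:ℝ≥0)
      = Measure.map (fun z : ℝ => s * z + (n:ℝ) * θ) (gaussianReal 0 1) := by
    rw [show (fun z : ℝ => s * z + (n:ℝ) * θ)
        = (· + (n:ℝ) * θ) ∘ (s * ·) from rfl,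
      ← Measure.map_map (measurable_add_const _) (measurable_const_mul s),
      gaussianReal_map_const_mul, gaussianReal_map_add_const]
    congr 1
    · ring
    · rw [mul_one]
      exact NNReal.coe_injective (by simpa using hs2.symm)
  rw [hmap, lintegral_map hf ((measurable_const_mul s).add_const _),
    ← lintegral_const_mul _ (show Measurable fun z : ℝ => f (s * z + (n:ℝ) * θ)
      from hf.comp ((measurable_const_mul s).add_const _))]
  refine lintegral_congr fun z => ?_
  rw [hf_def]
  simp only []
  rw [show ((n:ℕ) : ℝ≥0∞) = ENNReal.ofReal (n:ℝ) from (ENNReal.ofReal_natCast n).symm,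
    ← ENNReal.ofReal_mul (by positivity)]
  congr 1
  have e1 : (s * z + (n:ℝ) * θ) / (n:ℝ) = (z + s * θ) / s := by
    rw [← hs2]; field_simp
  have e2 : max ((z + s * θ) / s) 0 = max (z + s * θ) 0 / s := max_div_pos _ _ hs
  have e3 : max θ 0 = max (s * θ) 0 / s := by
    rw [← max_div_pos _ _ hs]
    congr 1
    field_simp
  rw [e1, e2, e3, ← hs2]
  have hsne : s ≠ 0 := hs.ne'
  field_simp

end Main


end Aux

/-- **Exact local minimax risk of the plug-in MLE for `max(θ,0)` in the Gaussian
location model (first part of Proposition 6.1).** -/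
theorem plugin_MLE_exact_local_risk (n : ℕ) (hn : 1 ≤ n) (δ : ℝ) (hδ : 0 < δ) :
    (⨆ θ ∈ {θ : ℝ | |θ| < δ},
      (n : ℝ≥0∞) *
        ∫⁻ x, ENNReal.ofReal
            ((max ((∑ i, x i) / (n : ℝ)) 0 - max θ 0) ^ 2)
          ∂(Measure.pi fun _ : Fin n => gaussianReal θ 1))
    = ⨆ θ ∈ Set.Ico (0:ℝ) δ,
        ((∫⁻ z in Set.Ici (-(Real.sqrt n * θ)), ENNReal.ofReal (z ^ 2) ∂(gaussianReal 0 1))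
          + ENNReal.ofReal ((n : ℝ) * θ ^ 2)
              * (gaussianReal 0 1) {z : ℝ | z < -(Real.sqrt n * θ)}) := by
  have hRHS : ∀ θ : ℝ, 0 ≤ θ →
      ((∫⁻ z in Set.Ici (-(Real.sqrt n * θ)), ENNReal.ofReal (z ^ 2) ∂(gaussianReal 0 1))
        + ENNReal.ofReal ((n : ℝ) * θ ^ 2)
            * (gaussianReal 0 1) {z : ℝ | z < -(Real.sqrt n * θ)})
      = (n : ℝ≥0∞) *
          ∫⁻ x, ENNReal.ofReal
              ((max ((∑ i, x i) / (n : ℝ)) 0 - max θ 0) ^ 2)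
            ∂(Measure.pi fun _ : Fin n => gaussianReal θ 1) := by
    intro θ hθ
    rw [key_eq n hn θ, J_eq (t := Real.sqrt n * θ) (by positivity)]
    congr 2
    rw [mul_pow, Real.sq_sqrt (by positivity : (0:ℝ) ≤ (n:ℝ))]
  apply le_antisymm
  · refine iSup₂_le fun θ hθ => ?_
    rcases le_or_gt 0 θ with h0 | h0
    · exact le_iSup₂_of_le θ ⟨h0, lt_of_abs_lt hθ⟩ (hRHS θ h0).ge
    · refine le_trans ?_ (le_iSup₂_of_le 0 ⟨le_rfl, hδ⟩ le_rfl)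
      have hneg : Real.sqrt n * θ ≤ 0 :=
        mul_nonpos_iff.mpr (Or.inl ⟨Real.sqrt_nonneg _, h0.le⟩)
      calc (n : ℝ≥0∞) * ∫⁻ x, ENNReal.ofReal
              ((max ((∑ i, x i) / (n : ℝ)) 0 - max θ 0) ^ 2)
            ∂(Measure.pi fun _ : Fin n => gaussianReal θ 1)
          = ∫⁻ z, ENNReal.ofReal
              ((max (z + Real.sqrt n * θ) 0 - max (Real.sqrt n * θ) 0) ^ 2)
              ∂(gaussianReal 0 1) := key_eq n hn θ
        _ ≤ ∫⁻ z, ENNReal.ofReal ((max (z + 0) 0 - max 0 0) ^ 2) ∂(gaussianReal 0 1) :=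
            J_mono hneg
        _ = _ := by
            rw [J_eq le_rfl]
            norm_num
  · refine iSup₂_le fun θ hθ => ?_
    obtain ⟨h0, hlt⟩ := hθ
    refine le_iSup₂_of_le θ (show |θ| < δ by rwa [abs_of_nonneg h0]) (hRHS θ h0).le
end
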